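/- arXiv:0910.3892 — 12 statements merged into one kernel-verified Lean document; each statement's English description precedes it below -/
import Mathlib

section
/- Let m be an integer and n a positive integer, and let p be an odd prime dividing m-4. Then the p-adic valuation of the sum over k from 0 to n-1 of C(2k,k)/m^k is at least the p-adic valuation of n. -/
/-!
Multiplied by `m ^ (n - 1)`, the sum becomes `f m` with `f x = ∑_{k<n} C(2k,k) x^(n-1-k)`.
Expanded around `x = 4`, `f` has coefficients
`c_j = (2n-1) C(2n-2,n-1) C(n-1,j) / ((2j+1) C(2j,j)) = n C(2n-1,n) C(n-1,j) / ((2j+1) C(2j,j))`,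
which the recursion `f_{n+1} = x f_n + C(2n,n)` verifies. As `(2j+1) C(2j,j)` divides `(2j+1)!`
and `v_p((2j+1)!) ≤ j` for odd `p`, every term `c_j (m-4)^j` has valuation at least `v_p(n)`,
and so does their sum.
-/

open Finset Nat

/-- The coefficient of `y ^ j` in `∑_{k ≤ n} C(2k,k) (y + 4)^(n-k)`. -/
def centralBinomTaylorCoeff (n j : ℕ) : ℚ :=
  (2 * n + 1) * centralBinom n * n.choose j / ((2 * j + 1) * centralBinom j)

theorem Nat.cast_centralBinom_succ (n : ℕ) :
    (centralBinom (n + 1) : ℚ) = 2 * (2 * n + 1) * centralBinom n / (n + 1) := by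
  rw [eq_div_iff (by positivity)]
  exact_mod_cast (mul_comm _ _).trans (succ_mul_centralBinom_succ n)

namespace centralBinomTaylorCoeff

theorem eq_zero_of_lt {n j : ℕ} (h : n < j) : centralBinomTaylorCoeff n j = 0 := by
  simp [centralBinomTaylorCoeff, Nat.choose_eq_zero_of_lt h]

theorem succ_zero (n : ℕ) :
    centralBinomTaylorCoeff (n + 1) 0 = 4 * centralBinomTaylorCoeff n 0 + centralBinom (n + 1) := by
  simp only [centralBinomTaylorCoeff, cast_centralBinom_succ, choose_zero_right, centralBinom_zero]
  field_simp
  push_cast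
  ring

theorem succ_succ (n j : ℕ) :
    centralBinomTaylorCoeff (n + 1) (j + 1) =
      centralBinomTaylorCoeff n j + 4 * centralBinomTaylorCoeff n (j + 1) := by
  rcases lt_or_ge n j with h | h
  · rw [eq_zero_of_lt h, eq_zero_of_lt (by omega), eq_zero_of_lt (by omega)]
    ring
  have hup : ((n + 1).choose (j + 1) : ℚ) = (n + 1) * n.choose j / (j + 1) := by
    rw [eq_div_iff (by positivity)]
    exact_mod_cast (add_one_mul_choose_eq n j).symm
  have hright : (n.choose (j + 1) : ℚ) = n.choose j * (n - j) / (j + 1) := by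
    rw [eq_div_iff (by positivity)]
    exact_mod_cast (choose_succ_right_eq n j)
  simp only [centralBinomTaylorCoeff, cast_centralBinom_succ, hup, hright]
  field_simp
  push_cast
  ring

end centralBinomTaylorCoeff

theorem sum_centralBinom_mul_add_four_pow (n : ℕ) (y : ℚ) :
    ∑ k ∈ range (n + 1), (centralBinom k : ℚ) * (y + 4) ^ (n - k) =
      ∑ j ∈ range (n + 1), centralBinomTaylorCoeff n j * y ^ j := by
  induction n with
  | zero => simp [centralBinomTaylorCoeff]
  | succ n ih =>
    have hlhs : ∑ k ∈ range (n + 2), (centralBinom k : ℚ) * (y + 4) ^ (n + 1 - k) =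
        (y + 4) * ∑ k ∈ range (n + 1), (centralBinom k : ℚ) * (y + 4) ^ (n - k) +
          centralBinom (n + 1) := by
      rw [sum_range_succ, mul_sum, Nat.sub_self, pow_zero, mul_one]
      congr 1
      refine sum_congr rfl fun k hk => ?_
      rw [show n + 1 - k = n - k + 1 by have := mem_range.mp hk; omega, pow_succ]
      ring
    have hshift : ∑ j ∈ range (n + 1), centralBinomTaylorCoeff n (j + 1) * y ^ (j + 1) =
        ∑ j ∈ range (n + 1), centralBinomTaylorCoeff n j * y ^ j - centralBinomTaylorCoeff n 0 := by
      have := sum_range_succ' (fun j => centralBinomTaylorCoeff n j * y ^ j) (n + 1)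
      rw [sum_range_succ, centralBinomTaylorCoeff.eq_zero_of_lt (lt_add_one n)] at this
      linarith
    have hsplit : ∑ j ∈ range (n + 1), centralBinomTaylorCoeff (n + 1) (j + 1) * y ^ (j + 1) =
        y * ∑ j ∈ range (n + 1), centralBinomTaylorCoeff n j * y ^ j +
          4 * ∑ j ∈ range (n + 1), centralBinomTaylorCoeff n (j + 1) * y ^ (j + 1) := by
      rw [mul_sum, mul_sum, ← sum_add_distrib]
      refine sum_congr rfl fun j _ => ?_
      rw [centralBinomTaylorCoeff.succ_succ, pow_succ]
      ring
    rw [hlhs, ih, sum_range_succ' (fun j => centralBinomTaylorCoeff (n + 1) j * y ^ j), hsplit,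
      hshift, centralBinomTaylorCoeff.succ_zero]
    ring

theorem padicValNat_two_mul_add_one_mul_centralBinom_le {p : ℕ} [Fact p.Prime] (hp : p ≠ 2)
    (j : ℕ) : padicValNat p ((2 * j + 1) * centralBinom j) ≤ j := by
  have hfac : (2 * j + 1) * centralBinom j * (j ! * j !) = (2 * j + 1)! := by
    have := choose_mul_factorial_mul_factorial (show j ≤ 2 * j by omega)
    rw [show 2 * j - j = j by omega] at this
    rw [factorial_succ, ← this, centralBinom_eq_two_mul_choose]
    ring
  have hsplit := congrArg (padicValNat p) hfac
  rw [padicValNat.mul (mul_ne_zero (by omega) (centralBinom_ne_zero j)) (by positivity)] at hsplit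
  -- Legendre: `(p - 1) v_p((2j+1)!) ≤ 2j + 1`.
  have hlegendre := sub_one_mul_padicValNat_factorial (p := p) (2 * j + 1)
  have hp3 : 3 ≤ p := (Fact.out : p.Prime).two_le.lt_of_ne' hp
  have : 2 * padicValNat p (2 * j + 1)! ≤ (p - 1) * padicValNat p (2 * j + 1)! :=
    Nat.mul_le_mul_right _ (by omega)
  omega

theorem le_padicValRat_centralBinomTaylorCoeff_add {p : ℕ} [Fact p.Prime] (hp : p ≠ 2)
    {n j : ℕ} (hj : j ≤ n) :
    (padicValNat p (n + 1) : ℤ) ≤ padicValRat p (centralBinomTaylorCoeff n j) + j := by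
  have hnum : (2 * n + 1) * centralBinom n * n.choose j =
      (n + 1) * ((2 * n + 1).choose (n + 1) * n.choose j) := by
    rw [centralBinom_eq_two_mul_choose, add_one_mul_choose_eq]
    ring
  have hc : centralBinomTaylorCoeff n j =
      ((n + 1) * ((2 * n + 1).choose (n + 1) * n.choose j) : ℕ) /
        ((2 * j + 1) * centralBinom j : ℕ) := by
    rw [← hnum, centralBinomTaylorCoeff]
    push_cast
    rfl
  have hchoose := (choose_pos hj).ne'
  have hchoose' := (choose_pos (show n + 1 ≤ 2 * n + 1 by omega)).ne'
  have hden := mul_ne_zero (show 2 * j + 1 ≠ 0 by omega) (centralBinom_ne_zero j)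
  rw [hc, padicValRat.div (by positivity) (by exact_mod_cast hden), padicValRat.of_nat,
    padicValRat.of_nat, padicValNat.mul (by positivity) (by positivity)]
  have := padicValNat_two_mul_add_one_mul_centralBinom_le hp j
  omega

namespace padicValRat

theorem add_eq_zero_or_le {p : ℕ} [Fact p.Prime] {t : ℤ} {q r : ℚ}
    (hq : q = 0 ∨ t ≤ padicValRat p q) (hr : r = 0 ∨ t ≤ padicValRat p r) :
    q + r = 0 ∨ t ≤ padicValRat p (q + r) := by
  rcases hq with rfl | hq
  · simpa using hr
  rcases hr with rfl | hr
  · simpa using Or.inr hq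
  by_cases hqr : q + r = 0
  · exact Or.inl hqr
  · exact Or.inr ((le_min hq hr).trans (min_le_padicValRat_add hqr))

theorem sum_eq_zero_or_le {p : ℕ} [Fact p.Prime] {ι : Type*} {s : Finset ι} {f : ι → ℚ} {t : ℤ}
    (h : ∀ i ∈ s, f i = 0 ∨ t ≤ padicValRat p (f i)) :
    ∑ i ∈ s, f i = 0 ∨ t ≤ padicValRat p (∑ i ∈ s, f i) :=
  sum_induction f (fun q => q = 0 ∨ t ≤ padicValRat p q) (fun _ _ => add_eq_zero_or_le)
    (Or.inl rfl) h

end padicValRat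

theorem centralBinomTaylorCoeff_mul_pow_eq_zero_or_le {p : ℕ} [Fact p.Prime] (hp : p ≠ 2)
    {n j : ℕ} (hj : j ≤ n) {x : ℚ} (hx : x = 0 ∨ 1 ≤ padicValRat p x) :
    centralBinomTaylorCoeff n j * x ^ j = 0 ∨
      (padicValNat p (n + 1) : ℤ) ≤ padicValRat p (centralBinomTaylorCoeff n j * x ^ j) := by
  by_cases hxj : x ^ j = 0
  · simp [hxj]
  have hpow : (j : ℤ) ≤ padicValRat p (x ^ j) := by
    rcases hx with rfl | hx
    · obtain rfl : j = 0 := by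
        by_contra h
        exact hxj (zero_pow h)
      simp
    · rw [padicValRat.pow]
      nlinarith
  have hc : centralBinomTaylorCoeff n j ≠ 0 := by
    simp only [centralBinomTaylorCoeff]
    have := (choose_pos hj).ne'
    have := (centralBinom_pos n).ne'
    have := (centralBinom_pos j).ne'
    positivity
  right
  rw [padicValRat.mul hc hxj]
  linarith [le_padicValRat_centralBinomTaylorCoeff_add hp hj]

theorem not_natCast_dvd_of_dvd_sub_four {p : ℕ} (hp : p.Prime) (hp2 : p ≠ 2) {m : ℤ}
    (hdvd : (p : ℤ) ∣ m - 4) : ¬ (p : ℤ) ∣ m := fun hm => by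
  have h4 : (p : ℤ) ∣ 2 ^ 2 := by simpa using dvd_sub hm hdvd
  exact hp2 ((prime_dvd_prime_iff_eq hp prime_two).mp
    (Int.natCast_dvd_natCast.mp (Int.Prime.dvd_pow' hp h4)))

theorem stmt_0 (m : ℤ) (n : ℕ) (hn : 0 < n) (p : ℕ) (hp : p.Prime) (hodd : Odd p)
    (hdvd : (p : ℤ) ∣ m - 4) :
    (∑ k ∈ Finset.range n, (Nat.choose (2 * k) k : ℚ) / (m : ℚ) ^ k) = 0 ∨
      (padicValNat p n : ℤ) ≤
        padicValRat p (∑ k ∈ Finset.range n, (Nat.choose (2 * k) k : ℚ) / (m : ℚ) ^ k) := by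
  have := Fact.mk hp
  obtain ⟨N, rfl⟩ : ∃ N, n = N + 1 := ⟨n - 1, by omega⟩
  have hp2 : p ≠ 2 := by
    rintro rfl
    exact Nat.not_odd_iff_even.mpr even_two hodd
  have hpm := not_natCast_dvd_of_dvd_sub_four hp hp2 hdvd
  have hm : (m : ℚ) ≠ 0 := Int.cast_ne_zero.mpr (by rintro rfl; exact hpm (dvd_zero _))
  set S := ∑ k ∈ range (N + 1), ((2 * k).choose k : ℚ) / (m : ℚ) ^ k
  have hexpand : S * (m : ℚ) ^ N =
      ∑ j ∈ range (N + 1), centralBinomTaylorCoeff N j * ((m : ℚ) - 4) ^ j := by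
    rw [← sum_centralBinom_mul_add_four_pow, sub_add_cancel, sum_mul]
    refine sum_congr rfl fun k hk => ?_
    rw [centralBinom_eq_two_mul_choose, ← pow_sub_mul_pow (m : ℚ) (mem_range_succ_iff.mp hk)]
    field_simp
  have hm4 : (m : ℚ) - 4 = 0 ∨ 1 ≤ padicValRat p ((m : ℚ) - 4) := by
    have := (padicValInt_dvd_iff 1 (m - 4)).mp (by simpa using hdvd)
    rw [show (m : ℚ) - 4 = ((m - 4 : ℤ) : ℚ) by push_cast; ring, padicValRat.of_int]
    exact_mod_cast this
  have hvm : padicValRat p ((m : ℚ) ^ N) = 0 := by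
    rw [padicValRat.pow, padicValRat.of_int, padicValInt.eq_zero_of_not_dvd hpm, Nat.cast_zero,
      mul_zero]
  rcases padicValRat.sum_eq_zero_or_le fun j hj =>
    centralBinomTaylorCoeff_mul_pow_eq_zero_or_le hp2 (mem_range_succ_iff.mp hj) hm4 with h | h
  · exact Or.inl (by simpa [hm] using hexpand.trans h)
  by_cases hS : S = 0
  · exact Or.inl hS
  right
  rwa [← hexpand, padicValRat.mul hS (pow_ne_zero _ hm), hvm, add_zero] at h
end

section
/- Let m be an integer and n a positive integer, and let p be an odd prime dividing m-4. Then the p-adic valuation of the sum over k from 0 to n-1 of C(n-1,k)·(-1)^k·C(2k,k)/m^k is at least ν_p(n). -/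
/-!
Multiplying the sum by `m ^ (n - 1)` and comparing the coefficient of `X ^ (n - 1)` in
`(m X + (X - 1) ^ 2) ^ (n - 1) = ((m - 4) X + (X + 1) ^ 2) ^ (n - 1)` turns it into the integer
`∑ C(n-1, k) C(2k, k) (m - 4) ^ (n - 1 - k)` over the `p`-adic unit `m ^ (n - 1)`. If `p ^ e ∣ n`,
then by Kummer's theorem adding `k` to itself in base `p` carries at every digit from
`n - k` to `e`, so `p ^ (e - (n - 1 - k))` divides `C(2k, k)`, while `p ^ (n - 1 - k)` divides
`(m - 4) ^ (n - 1 - k)`.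
-/

open Finset Polynomial

theorem le_mod_add_mod_of_dvd_add {M r j : ℕ} (h : M ∣ r + j + 1) (hj : 2 * j + 2 ≤ M) :
    M ≤ r % M + r % M := by
  have hdvd : M ∣ r % M + j + 1 := by
    rw [show r + j + 1 = r % M + j + 1 + M * (r / M) by have := Nat.mod_add_div r M; omega] at h
    exact (Nat.dvd_add_left (dvd_mul_right M _)).mp h
  -- `r % M + j + 1` is a positive multiple of `M` below `2 * M`, so `r % M = M - 1 - j`
  have hlt := Nat.mod_lt r (show 0 < M by omega)
  have := Nat.eq_of_dvd_of_lt_two_mul (by omega) hdvd (by omega)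
  omega

theorem two_mul_add_two_le_pow {p j i : ℕ} (hp : 2 ≤ p) (hi : j < i) : 2 * j + 2 ≤ p ^ i :=
  calc 2 * j + 2 ≤ 2 ^ (j + 1) := by rw [pow_succ]; have := Nat.lt_two_pow_self (n := j); omega
    _ ≤ p ^ (j + 1) := Nat.pow_le_pow_left hp _
    _ ≤ p ^ i := Nat.pow_le_pow_right (by omega) hi

theorem pow_sub_dvd_centralBinom {p e r j : ℕ} [hp : Fact p.Prime] (h : p ^ e ∣ r + j + 1) :
    p ^ (e - j) ∣ r.centralBinom := by
  rw [padicValNat_dvd_iff_le (Nat.centralBinom_ne_zero r), Nat.centralBinom_eq_two_mul_choose,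
    two_mul, padicValNat_choose' (b := Nat.log p (r + r) + e + 1) (by omega)]
  calc e - j = #(Ico (j + 1) (e + 1)) := by simp
    _ ≤ _ := by
      refine card_le_card fun i hi => ?_
      rw [mem_Ico] at hi
      rw [mem_filter, mem_Ico]
      exact ⟨by omega, le_mod_add_mod_of_dvd_add (dvd_trans (pow_dvd_pow p (by omega)) h)
        (two_mul_add_two_le_pow hp.out.two_le (by omega))⟩

theorem coeff_sq_add_C_mul_X_pow {R : Type*} [CommRing R] (r a : R) (N : ℕ) :
    (((X + C r) ^ 2 + C a * X) ^ N).coeff N =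
      ∑ k ∈ range (N + 1), (N.choose k : R) * r ^ k * k.centralBinom * a ^ (N - k) := by
  rw [add_pow, finsetSum_coeff]
  refine sum_congr rfl fun k hk => ?_
  have hkN : k ≤ N := Nat.lt_succ_iff.mp (mem_range.mp hk)
  rw [show ((X + C r) ^ 2) ^ k * (C a * X) ^ (N - k) * (N.choose k : R[X]) =
      C (N.choose k * a ^ (N - k)) * (X ^ (N - k) * (X + C r) ^ (2 * k)) by
    simp only [C_mul, C_pow, C_eq_natCast, pow_mul]; ring]
  rw [coeff_C_mul, coeff_X_pow_mul', if_pos (Nat.sub_le N k), Nat.sub_sub_self hkN,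
    coeff_X_add_C_pow, Nat.centralBinom_eq_two_mul_choose, two_mul, Nat.add_sub_cancel]
  ring

theorem sum_choose_mul_neg_one_pow_centralBinom {R : Type*} [CommRing R] (x : R) (N : ℕ) :
    ∑ k ∈ range (N + 1), (N.choose k : R) * (-1) ^ k * k.centralBinom * x ^ (N - k) =
      ∑ k ∈ range (N + 1), (N.choose k : R) * k.centralBinom * (x - 4) ^ (N - k) := by
  have h := coeff_sq_add_C_mul_X_pow 1 (x - 4) N
  rw [show (X + C 1) ^ 2 + C (x - 4) * X = (X + C (-1)) ^ 2 + C x * X by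
    simp only [map_sub, map_neg, map_one, C_ofNat]; ring, coeff_sq_add_C_mul_X_pow] at h
  simpa using h

theorem sum_choose_mul_neg_one_pow_centralBinom_div_pow {K : Type*} [Field K] {x : K}
    (hx : x ≠ 0) (N : ℕ) :
    ∑ k ∈ range (N + 1), (N.choose k : K) * (-1) ^ k * k.centralBinom / x ^ k =
      (∑ k ∈ range (N + 1), (N.choose k : K) * k.centralBinom * (x - 4) ^ (N - k)) / x ^ N := by
  rw [← sum_choose_mul_neg_one_pow_centralBinom, eq_div_iff (pow_ne_zero _ hx), sum_mul]
  refine sum_congr rfl fun k hk => ?_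
  rw [← pow_sub_mul_pow x (Nat.lt_succ_iff.mp (mem_range.mp hk))]
  field_simp

theorem pow_dvd_sum_choose_mul_centralBinom {p e N : ℕ} [Fact p.Prime] (he : p ^ e ∣ N + 1)
    {y : ℤ} (hy : (p : ℤ) ∣ y) :
    (p : ℤ) ^ e ∣ ∑ k ∈ range (N + 1), (N.choose k : ℤ) * k.centralBinom * y ^ (N - k) := by
  refine dvd_sum fun k hk => ?_
  have hkN : k + (N - k) + 1 = N + 1 := by have := mem_range.mp hk; omega
  have hbinom : (p : ℤ) ^ (e - (N - k)) ∣ k.centralBinom := by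
    exact_mod_cast pow_sub_dvd_centralBinom (hkN ▸ he)
  calc (p : ℤ) ^ e ∣ (p : ℤ) ^ (e - (N - k)) * (p : ℤ) ^ (N - k) := by
        rw [← pow_add]; exact pow_dvd_pow _ le_tsub_add
    _ ∣ _ := mul_dvd_mul (hbinom.mul_left _) (pow_dvd_pow_of_dvd hy _)

theorem eq_zero_or_le_padicValRat_intCast_div_pow {p e : ℕ} [Fact p.Prime] {a m : ℤ}
    (ha : (p : ℤ) ^ e ∣ a) (hm : ¬ (p : ℤ) ∣ m) (N : ℕ) :
    (a / m ^ N : ℚ) = 0 ∨ (e : ℤ) ≤ padicValRat p (a / m ^ N) := by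
  rcases eq_or_ne a 0 with rfl | ha0
  · simp
  have hm0 : (m : ℚ) ≠ 0 := Int.cast_ne_zero.mpr fun h => hm (h ▸ dvd_zero _)
  right
  rw [padicValRat.div (Int.cast_ne_zero.mpr ha0) (pow_ne_zero _ hm0), padicValRat.pow _,
    padicValRat.of_int, padicValRat.of_int, padicValInt.eq_zero_of_not_dvd hm]
  simpa [ha0] using (padicValInt_dvd_iff e a).mp ha

theorem stmt_1_general (m : ℤ) (n : ℕ) (p : ℕ) (hp : p.Prime) (hodd : Odd p)
    (hdvd : (p : ℤ) ∣ m - 4) :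
    (∑ k ∈ Finset.range n,
        ((n - 1).choose k : ℚ) * (-1) ^ k * (Nat.choose (2 * k) k : ℚ) / (m : ℚ) ^ k) = 0 ∨
      (padicValNat p n : ℤ) ≤
        padicValRat p (∑ k ∈ Finset.range n,
          ((n - 1).choose k : ℚ) * (-1) ^ k * (Nat.choose (2 * k) k : ℚ) / (m : ℚ) ^ k) := by
  have : Fact p.Prime := ⟨hp⟩
  have hm : ¬ (p : ℤ) ∣ m := fun h => by
    have h4 : (p : ℤ) ∣ 2 ^ 2 := by simpa using dvd_sub h hdvd
    replace h4 : p ∣ 2 ^ 2 := by exact_mod_cast h4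
    rw [(Nat.prime_dvd_prime_iff_eq hp Nat.prime_two).mp (hp.dvd_of_dvd_pow h4)] at hodd
    exact Nat.not_odd_iff_even.mpr even_two hodd
  cases n with
  | zero => simp
  | succ N =>
    have hm0 : (m : ℚ) ≠ 0 := Int.cast_ne_zero.mpr fun h => hm (h ▸ dvd_zero _)
    simp only [Nat.add_sub_cancel, ← Nat.centralBinom_eq_two_mul_choose,
      sum_choose_mul_neg_one_pow_centralBinom_div_pow hm0]
    exact_mod_cast eq_zero_or_le_padicValRat_intCast_div_pow
      (pow_dvd_sum_choose_mul_centralBinom pow_padicValNat_dvd hdvd) hm N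

theorem stmt_1 (m : ℤ) (n : ℕ) (hn : 0 < n) (p : ℕ) (hp : p.Prime) (hodd : Odd p)
    (hdvd : (p : ℤ) ∣ m - 4) :
    (∑ k ∈ Finset.range n,
        ((n - 1).choose k : ℚ) * (-1) ^ k * (Nat.choose (2 * k) k : ℚ) / (m : ℚ) ^ k) = 0 ∨
      (padicValNat p n : ℤ) ≤
        padicValRat p (∑ k ∈ Finset.range n,
          ((n - 1).choose k : ℚ) * (-1) ^ k * (Nat.choose (2 * k) k : ℚ) / (m : ℚ) ^ k) :=
  stmt_1_general m n p hp hodd hdvd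
end

section
/- Let m be an integer, n a positive integer, and p a prime with p > 3 dividing m-4. Then (1/n)·Σ_{k=0}^{n-1} C(2k,k)/m^k ≡ C(2n-1,n-1)/4^{n-1} (mod p^{ν_p(m-4)}), i.e., the p-adic valuation of the difference is at least ν_p(m-4). -/
/-!
Write `t = m - 4`, `N = n - 1` and `d j = (2j+1)·C(2j,j)`. Expanding `∑_{k ≤ N} C(2k,k) m^(N-k)`
in powers of `t` gives the coefficients `d N · C(N,j) / d j` (they satisfy the same Pascal-type
recurrence as the left side), while `C(2N+1,N) (m/4)^N` has the coefficients
`C(2N+1,N) C(N,j) / 4^j`. As `d N = (N+1) C(2N+1,N)`, the difference in the theorem is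
`m^(-N) C(2N+1,N) ∑_j C(N,j) t^j (1/d j - 1/4^j)`. The term `j = 0` vanishes, and for `j ≥ 1`
and `p ≥ 5` we have `ν_p(d j) ≤ j - 1` (because `p^ν_p(d j) ≤ 2j(2j+1) < 5^j` once `j ≥ 2`),
so each term has valuation at least `j ν_p(t) - (j - 1) ≥ ν_p(t)`.
-/

open Finset Nat

def oddCentralBinom (j : ℕ) : ℕ := (2 * j + 1) * centralBinom j

@[simp]
lemma oddCentralBinom_zero : oddCentralBinom 0 = 1 := rfl

lemma oddCentralBinom_pos (j : ℕ) : 0 < oddCentralBinom j :=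
  Nat.mul_pos (by omega) (centralBinom_pos j)

lemma succ_mul_oddCentralBinom_succ (j : ℕ) :
    (j + 1) * oddCentralBinom (j + 1) = 2 * (2 * j + 3) * oddCentralBinom j := by
  unfold oddCentralBinom
  linear_combination (2 * j + 3) * succ_mul_centralBinom_succ j

lemma oddCentralBinom_succ (N : ℕ) :
    oddCentralBinom (N + 1) = 4 * oddCentralBinom N + centralBinom (N + 1) := by
  refine Nat.eq_of_mul_eq_mul_left (by omega : 0 < N + 1) ?_
  rw [succ_mul_oddCentralBinom_succ, mul_add (N + 1), succ_mul_centralBinom_succ, oddCentralBinom]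
  ring

lemma oddCentralBinom_eq_succ_mul_choose (N : ℕ) :
    oddCentralBinom N = (N + 1) * (2 * N + 1).choose N := by
  rw [oddCentralBinom, centralBinom_eq_two_mul_choose, add_one_mul_choose_eq,
    choose_symm_half, mul_comm]

lemma two_mul_mul_two_mul_add_one_lt_five_pow {j : ℕ} (hj : 2 ≤ j) :
    2 * j * (2 * j + 1) < 5 ^ j := by
  induction j, hj using Nat.le_induction with
  | base => norm_num
  | succ k hk ih =>
    calc 2 * (k + 1) * (2 * (k + 1) + 1) ≤ 5 * (2 * k * (2 * k + 1)) := by nlinarith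
      _ < 5 ^ (k + 1) := by rw [pow_succ]; omega

lemma padicValNat_oddCentralBinom_le {p : ℕ} [Fact p.Prime] (h5 : 5 ≤ p) {j : ℕ}
    (hj : 1 ≤ j) :
    padicValNat p (oddCentralBinom j) ≤ j - 1 := by
  have hp : p.Prime := Fact.out
  rw [oddCentralBinom, padicValNat.mul (by omega) (centralBinom_pos j).ne']
  obtain rfl | hj2 := hj.eq_or_lt
  · have (k : ℕ) (hk : k < 5) (hk0 : k ≠ 0) : padicValNat p k = 0 :=
      padicValNat.eq_zero_of_not_dvd fun h => by have := Nat.le_of_dvd (by omega) h; omega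
    simp [this 3 (by norm_num) (by norm_num), this 2 (by norm_num) (by norm_num), centralBinom]
  · have h_odd : p ^ padicValNat p (2 * j + 1) ≤ 2 * j + 1 :=
      Nat.le_of_dvd (by omega) pow_padicValNat_dvd
    have h_binom : p ^ padicValNat p (centralBinom j) ≤ 2 * j := by
      have := pow_factorization_choose_le (p := p) (k := j) (by omega : 0 < 2 * j)
      rwa [factorization_def _ hp, ← centralBinom_eq_two_mul_choose] at this
    have : p ^ (padicValNat p (2 * j + 1) + padicValNat p (centralBinom j)) < p ^ j :=
      calc _ ≤ (2 * j + 1) * (2 * j) := by rw [pow_add]; exact Nat.mul_le_mul h_odd h_binom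
        _ < 5 ^ j := by linarith [two_mul_mul_two_mul_add_one_lt_five_pow hj2]
        _ ≤ p ^ j := Nat.pow_le_pow_left h5 j
    have := (Nat.pow_lt_pow_iff_right hp.one_lt).mp this
    omega

def expansionCoeff (N j : ℕ) : ℚ := oddCentralBinom N * N.choose j / oddCentralBinom j

lemma expansionCoeff_of_lt {N j : ℕ} (h : N < j) : expansionCoeff N j = 0 := by
  simp [expansionCoeff, choose_eq_zero_of_lt h]

lemma expansionCoeff_succ_zero (N : ℕ) :
    expansionCoeff (N + 1) 0 = 4 * expansionCoeff N 0 + centralBinom (N + 1) := by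
  simp [expansionCoeff, oddCentralBinom_succ]

lemma expansionCoeff_succ_succ (N j : ℕ) :
    expansionCoeff (N + 1) (j + 1) = 4 * expansionCoeff N (j + 1) + expansionCoeff N j := by
  obtain hjN | hNj := le_or_gt j N
  · have hN : ((N + 1 : ℕ) : ℚ) * oddCentralBinom (N + 1)
        = 2 * (2 * N + 3) * oddCentralBinom N := mod_cast succ_mul_oddCentralBinom_succ N
    have hj : ((j + 1 : ℕ) : ℚ) * oddCentralBinom (j + 1)
        = 2 * (2 * j + 3) * oddCentralBinom j := mod_cast succ_mul_oddCentralBinom_succ j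
    have hNj : ((N + 1 : ℕ) : ℚ) * N.choose j = (N + 1).choose (j + 1) * (j + 1) := by
      exact_mod_cast add_one_mul_choose_eq N j
    have hjj : (N.choose (j + 1) : ℚ) * (j + 1) = N.choose j * (N - j) := by
      exact_mod_cast choose_succ_right_eq N j
    have := (oddCentralBinom_pos N).ne'
    have := (oddCentralBinom_pos j).ne'
    have := (oddCentralBinom_pos (j + 1)).ne'
    simp only [expansionCoeff]
    field_simp
    push_cast at *
    apply mul_left_cancel₀ (show ((N : ℚ) + 1) * (j + 1) ≠ 0 by positivity)
    linear_combination (j + 1) * ((N + 1).choose (j + 1) : ℚ) * oddCentralBinom j * hN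
      - 2 * (2 * N + 3) * (oddCentralBinom N : ℚ) * oddCentralBinom j * hNj
      - 4 * (N + 1) * (oddCentralBinom N : ℚ) * oddCentralBinom j * hjj
      - (N + 1) * (oddCentralBinom N : ℚ) * N.choose j * hj
  · simp [expansionCoeff_of_lt, hNj, Nat.lt_succ_of_lt hNj]

theorem sum_centralBinom_mul_pow_eq (N : ℕ) (t : ℚ) :
    ∑ k ∈ range (N + 1), (centralBinom k : ℚ) * (t + 4) ^ (N - k)
      = ∑ j ∈ range (N + 1), expansionCoeff N j * t ^ j := by
  induction N with
  | zero => simp [expansionCoeff]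
  | succ N ih =>
    have lhs : ∑ k ∈ range (N + 2), (centralBinom k : ℚ) * (t + 4) ^ (N + 1 - k)
        = (t + 4) * ∑ k ∈ range (N + 1), (centralBinom k : ℚ) * (t + 4) ^ (N - k)
          + centralBinom (N + 1) := by
      rw [sum_range_succ, Nat.sub_self, pow_zero, mul_one, mul_sum]
      congr 1
      refine sum_congr rfl fun k hk => ?_
      rw [Nat.sub_add_comm (mem_range_succ_iff.mp hk), pow_succ]
      ring
    have shift : ∑ j ∈ range (N + 1), expansionCoeff N j * t ^ j
        = ∑ j ∈ range (N + 1), expansionCoeff N (j + 1) * t ^ (j + 1) + expansionCoeff N 0 := by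
      have := sum_range_succ' (fun j => expansionCoeff N j * t ^ j) (N + 1)
      rwa [sum_range_succ, expansionCoeff_of_lt N.lt_succ_self, zero_mul, add_zero, pow_zero,
        mul_one] at this
    have rhs : ∑ j ∈ range (N + 2), expansionCoeff (N + 1) j * t ^ j
        = (t + 4) * ∑ j ∈ range (N + 1), expansionCoeff N j * t ^ j
          + centralBinom (N + 1) :=
      calc ∑ j ∈ range (N + 2), expansionCoeff (N + 1) j * t ^ j
          = ∑ j ∈ range (N + 1), (4 * (expansionCoeff N (j + 1) * t ^ (j + 1))
              + t * (expansionCoeff N j * t ^ j))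
            + (4 * expansionCoeff N 0 + centralBinom (N + 1)) := by
            rw [sum_range_succ', expansionCoeff_succ_zero, pow_zero, mul_one]
            congr 1
            refine sum_congr rfl fun j _ => ?_
            rw [expansionCoeff_succ_succ]
            ring
        _ = t * ∑ j ∈ range (N + 1), expansionCoeff N j * t ^ j
              + 4 * (∑ j ∈ range (N + 1), expansionCoeff N (j + 1) * t ^ (j + 1)
                + expansionCoeff N 0) + centralBinom (N + 1) := by
            rw [sum_add_distrib, ← mul_sum, ← mul_sum]
            ring
        _ = _ := by rw [← shift]; ring
    rw [lhs, rhs, ih]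

lemma sum_centralBinom_div_pow (N : ℕ) {m : ℚ} (hm : m ≠ 0) :
    ∑ k ∈ range (N + 1), (centralBinom k : ℚ) / m ^ k
      = (∑ j ∈ range (N + 1), expansionCoeff N j * (m - 4) ^ j) / m ^ N := by
  rw [← sum_centralBinom_mul_pow_eq, sub_add_cancel, sum_div]
  refine sum_congr rfl fun k hk => ?_
  rw [← Nat.add_sub_of_le (mem_range_succ_iff.mp hk), pow_add, Nat.add_sub_cancel_left]
  field_simp

lemma one_div_four_pow_eq (N : ℕ) {m : ℚ} (hm : m ≠ 0) :
    1 / (4 : ℚ) ^ N = (∑ j ∈ range (N + 1), N.choose j * (m - 4) ^ j / 4 ^ j) / m ^ N := by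
  have : m ^ N / 4 ^ N = ∑ j ∈ range (N + 1), N.choose j * (m - 4) ^ j / 4 ^ j := by
    rw [show m = (m - 4) + 4 by ring, add_pow, sum_div, add_sub_cancel_right]
    refine sum_congr rfl fun j hj => ?_
    rw [← Nat.add_sub_of_le (mem_range_succ_iff.mp hj), pow_add, Nat.add_sub_cancel_left]
    field_simp
  rw [← this]
  field_simp

theorem mean_sub_eq (N : ℕ) {m : ℚ} (hm : m ≠ 0) :
    1 / (N + 1 : ℚ) * ∑ k ∈ range (N + 1), (centralBinom k : ℚ) / m ^ k
        - ((2 * N + 1).choose N : ℚ) / 4 ^ N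
      = ∑ j ∈ range (N + 1),
          (((2 * N + 1).choose N * N.choose j * (4 ^ j - oddCentralBinom j) : ℤ) : ℚ)
            * (m - 4) ^ j / (oddCentralBinom j * (4 ^ j * m ^ N)) := by
  have hN : (oddCentralBinom N : ℚ) = (N + 1) * (2 * N + 1).choose N := by
    exact_mod_cast oddCentralBinom_eq_succ_mul_choose N
  rw [sum_centralBinom_div_pow N hm, div_eq_mul_one_div _ ((4 : ℚ) ^ N), one_div_four_pow_eq N hm,
    mul_div_assoc', mul_div_assoc', div_sub_div_same, mul_sum, mul_sum, ← sum_sub_distrib,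
    sum_div]
  refine sum_congr rfl fun j _ => ?_
  have := (oddCentralBinom_pos j).ne'
  simp only [expansionCoeff, hN]
  push_cast
  field_simp

lemma le_padicValRat_sum {p : ℕ} [Fact p.Prime] {e : ℤ} {s : Finset ℕ} {F : ℕ → ℚ}
    (hs : ∑ i ∈ s, F i ≠ 0) (hF : ∀ i ∈ s, F i ≠ 0 → e ≤ padicValRat p (F i)) :
    e ≤ padicValRat p (∑ i ∈ s, F i) := by
  classical
  induction s using Finset.induction_on with
  | empty => simp at hs
  | insert a s ha ih =>
    rw [sum_insert ha] at hs ⊢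
    have ih' := fun h => ih h fun i hi => hF i (mem_insert_of_mem hi)
    have hFa := hF a (mem_insert_self a s)
    by_cases h₁ : F a = 0
    · rw [h₁, zero_add] at hs ⊢
      exact ih' hs
    by_cases h₂ : ∑ i ∈ s, F i = 0
    · rw [h₂, add_zero] at hs ⊢
      exact hFa h₁
    exact (le_min (hFa h₁) (ih' h₂)).trans (padicValRat.min_le_padicValRat_add hs)

lemma padicValInt_le_padicValRat_mul_pow_div {p : ℕ} [Fact p.Prime] {a d u : ℚ} {t : ℤ} {j : ℕ}
    (ht : (p : ℤ) ∣ t) (hj : 1 ≤ j) (ha : 0 ≤ padicValRat p a)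
    (hd : padicValRat p d ≤ j - 1) (hu : padicValRat p u = 0)
    (h : a * t ^ j / (d * u) ≠ 0) :
    padicValInt p t ≤ padicValRat p (a * t ^ j / (d * u)) := by
  simp only [div_ne_zero_iff, mul_ne_zero_iff, pow_ne_zero_iff (by omega : j ≠ 0),
    Int.cast_ne_zero] at h
  obtain ⟨⟨ha0, ht0⟩, hd0, hu0⟩ := h
  have hv : 1 ≤ padicValInt p t :=
    ((padicValInt_dvd_iff 1 t).mp (by rwa [pow_one])).resolve_left ht0
  rw [padicValRat.div (by positivity) (mul_ne_zero hd0 hu0), padicValRat.mul ha0 (by positivity),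
    padicValRat.mul hd0 hu0, padicValRat.pow, padicValRat.of_int, hu]
  have : (0 : ℤ) ≤ (j - 1) * (padicValInt p t - 1) := by
    apply mul_nonneg <;> omega
  nlinarith

lemma not_dvd_four_pow_mul_pow {p : ℕ} (hp : p.Prime) (h3 : 3 < p) {m : ℤ}
    (hdvd : (p : ℤ) ∣ m - 4) (j N : ℕ) : ¬ (p : ℤ) ∣ 4 ^ j * m ^ N := by
  have hpZ := Nat.prime_iff_prime_int.mp hp
  have h4 : ¬ (p : ℤ) ∣ 4 := fun h => by
    have := Nat.le_of_dvd (by norm_num) (Int.natCast_dvd_natCast.mp h)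
    interval_cases p; norm_num at hp
  intro h
  rcases hpZ.dvd_mul.mp h with h | h
  · exact h4 (hpZ.dvd_of_dvd_pow h)
  · exact h4 (by simpa using dvd_sub (hpZ.dvd_of_dvd_pow h) hdvd)

theorem stmt_2 (m : ℤ) (n : ℕ) (hn : 0 < n) (p : ℕ) (hp : p.Prime) (h3 : 3 < p)
    (hdvd : (p : ℤ) ∣ m - 4) :
    (1 / (n : ℚ)) * ∑ k ∈ Finset.range n, (Nat.choose (2 * k) k : ℚ) / (m : ℚ) ^ k
        = (Nat.choose (2 * n - 1) (n - 1) : ℚ) / 4 ^ (n - 1) ∨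
      (padicValInt p (m - 4) : ℤ) ≤
        padicValRat p
          ((1 / (n : ℚ)) * ∑ k ∈ Finset.range n, (Nat.choose (2 * k) k : ℚ) / (m : ℚ) ^ k
            - (Nat.choose (2 * n - 1) (n - 1) : ℚ) / 4 ^ (n - 1)) := by
  obtain ⟨N, rfl⟩ : ∃ N, n = N + 1 := ⟨n - 1, by omega⟩
  have := Fact.mk hp
  have hunit (j : ℕ) : padicValRat p (4 ^ j * (m : ℚ) ^ N) = 0 := by
    rw [show (4 : ℚ) ^ j * (m : ℚ) ^ N = ((4 ^ j * m ^ N : ℤ) : ℚ) by push_cast; rfl,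
      padicValRat.of_int,
      padicValInt.eq_zero_of_not_dvd (not_dvd_four_pow_mul_pow hp h3 hdvd j N), Nat.cast_zero]
  have hm : (m : ℚ) ≠ 0 := by
    have := not_dvd_four_pow_mul_pow hp h3 hdvd 0 1
    rw [pow_zero, one_mul, pow_one] at this
    exact Int.cast_ne_zero.mpr fun h => this (h ▸ dvd_zero _)
  simp only [← centralBinom_eq_two_mul_choose, show 2 * (N + 1) - 1 = 2 * N + 1 by omega,
    Nat.add_sub_cancel, Nat.cast_succ]
  refine or_iff_not_imp_left.mpr fun hne => ?_
  replace hne := sub_ne_zero.mpr hne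
  rw [mean_sub_eq N hm, show (m : ℚ) - 4 = ((m - 4 : ℤ) : ℚ) by push_cast; rfl] at hne ⊢
  refine le_padicValRat_sum hne fun j _ hj => ?_
  obtain rfl | hj1 := Nat.eq_zero_or_pos j
  · simp at hj
  refine padicValInt_le_padicValRat_mul_pow_div hdvd hj1 ?_ ?_ (hunit j) hj
  · rw [padicValRat.of_int]
    exact Int.natCast_nonneg _
  · rw [padicValRat.of_nat]
    have hp4 : p ≠ 4 := by rintro rfl; norm_num at hp
    have := padicValNat_oddCentralBinom_le (p := p) (by omega) hj1
    omega
end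

section
/- Let m be an integer, n a positive integer, and p a prime with p > 3 dividing m-4. Then (1/n)·Σ_{k=0}^{n-1} C(n-1,k)·(-1)^k·C(2k,k)/m^k ≡ C_{n-1}/4^{n-1} (mod p^{ν_p(m-4)}), where C_{n-1} = C(2n-2,n-1)/n is the (n-1)-st Catalan number. -/
/-!
Put `N = n - 1`. Since `C(2k,k) = (-4)^k * choose(-1/2, k)`, Chu–Vandermonde gives
`∑ₖ C(M,k) (-1)^k C(2k,k) 4^(M-k) = C(2M,M)`, and expanding `m = (m - 4) + 4` turns
`m^N * ∑ₖ C(N,k) (-1)^k C(2k,k) / m^k` into `∑ⱼ C(N,j) C(2(N-j), N-j) (m - 4)^j`.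
The `j = 0` term is `n * C_N`, so the difference in question is `z / (n * (4m)^N)` with
`z = n C_N (4^N - m^N) + 4^N ∑_{j ≥ 1} C(N,j) C(2(N-j), N-j) (m - 4)^j`.
Let `e = ν_p(m - 4)` and `a = ν_p(n)`; the first summand of `z` is clearly divisible by `p^(a+e)`.
For the others, Kummer's theorem gives `p^(a+1-j) ∣ C(2(N-j), N-j)`: for `j ≤ i ≤ a` adding
`N - j ≡ -(j+1) (mod p^i)` to itself carries at digit `i`, because `p^i ≥ 5i ≥ 2j + 2`.
With `p^(ej) ∣ (m - 4)^j` this yields `p^(a+e) ∣ z`, so the difference has `ν_p ≥ e`.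
-/

open Finset

theorem Ring.choose_neg_half_mul_neg_four_pow (k : ℕ) :
    Ring.choose (-1 / 2 : ℚ) k * (-4) ^ k = k.centralBinom := by
  induction k with
  | zero => simp
  | succ k ih =>
    have hrec := Ring.choose_smul_choose (-1 / 2 : ℚ) (Nat.le_succ k)
    rw [Nat.choose_succ_self_right, Nat.succ_eq_add_one, Nat.add_sub_cancel_left,
      Ring.choose_one_right, nsmul_eq_mul] at hrec
    have hcb : ((k + 1 : ℕ) : ℚ) * (k + 1).centralBinom = 2 * (2 * k + 1) * k.centralBinom := by
      exact_mod_cast Nat.succ_mul_centralBinom_succ k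
    apply mul_left_cancel₀ (Nat.cast_ne_zero.mpr k.succ_ne_zero : ((k + 1 : ℕ) : ℚ) ≠ 0)
    rw [hcb, ← ih]
    linear_combination (-4) ^ (k + 1) * hrec

theorem sum_choose_mul_neg_one_pow_centralBinom_mul_four_pow (M : ℕ) :
    ∑ k ∈ range (M + 1), (M.choose k : ℤ) * ((-1) ^ k * k.centralBinom) * 4 ^ (M - k) =
      M.centralBinom := by
  -- Chu–Vandermonde for `choose (M - 1/2) M`, which is `(-1)^M * choose (-1/2) M`
  have hvdm := Ring.add_choose_eq (r := (M : ℚ)) (s := -1 / 2) M (Commute.all _ _)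
  rw [← Nat.sum_antidiagonal_swap] at hvdm
  simp only [Prod.fst_swap, Prod.snd_swap] at hvdm
  rw [Nat.sum_antidiagonal_eq_sum_range_succ
    (fun j i => Ring.choose (M : ℚ) i * Ring.choose (-1 / 2 : ℚ) j)] at hvdm
  have hneg := Ring.choose_neg (1 / 2 : ℚ) M
  rw [show (1 / 2 : ℚ) + M - 1 = M + -1 / 2 by ring, hvdm] at hneg
  suffices h : (M.centralBinom : ℚ) = ∑ k ∈ range (M + 1),
      (M.choose k : ℚ) * ((-1) ^ k * k.centralBinom) * 4 ^ (M - k) by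
    exact_mod_cast h.symm
  rw [← Ring.choose_neg_half_mul_neg_four_pow, neg_div, hneg, smul_sum, sum_mul]
  refine sum_congr rfl fun k hk => ?_
  rw [Ring.choose_natCast, Nat.choose_symm (Nat.lt_succ_iff.mp (mem_range.mp hk)),
    ← Ring.choose_neg_half_mul_neg_four_pow, Units.smul_def, zsmul_eq_mul, Int.cast_negOnePow,
    zpow_natCast]
  obtain ⟨d, rfl⟩ := Nat.exists_eq_add_of_le (Nat.lt_succ_iff.mp (mem_range.mp hk))
  have hsign : ((-1 : ℚ)) ^ d * (-4) ^ d = 4 ^ d := by rw [← mul_pow]; norm_num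
  rw [Nat.add_sub_cancel_left]
  linear_combination
    ((k + d).choose k * Ring.choose (-1 / 2 : ℚ) k * (-4) ^ k * (-1) ^ k : ℚ) * hsign

theorem Nat.choose_mul_choose_sub_comm (n i j : ℕ) :
    n.choose i * (n - i).choose j = n.choose j * (n - j).choose i := by
  have hi := Nat.choose_mul (n := n) (Nat.le_add_right i j)
  have hj := Nat.choose_mul (n := n) (Nat.le_add_left j i)
  rw [Nat.add_sub_cancel_left] at hi
  rw [Nat.add_sub_cancel, ← Nat.choose_symm_add] at hj
  rw [← hi, ← hj]

theorem sum_choose_mul_add_pow {R : Type*} [CommSemiring R] (c : ℕ → R) (y z : R) (N : ℕ) :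
    ∑ k ∈ range (N + 1), (N.choose k : R) * c k * (y + z) ^ (N - k) =
      ∑ j ∈ range (N + 1), (N.choose j : R) * y ^ j *
        ∑ k ∈ range (N - j + 1), ((N - j).choose k : R) * c k * z ^ (N - j - k) := by
  simp_rw [add_pow, mul_sum]
  rw [sum_comm' (t' := range (N + 1)) (s' := fun j => range (N - j + 1))]
  · refine sum_congr rfl fun j _ => sum_congr rfl fun k _ => ?_
    have hchoose : (N.choose k : R) * ((N - k).choose j) = N.choose j * (N - j).choose k := by
      rw [← Nat.cast_mul, ← Nat.cast_mul, Nat.choose_mul_choose_sub_comm]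
    rw [Nat.sub_right_comm]
    calc _ = (N.choose k : R) * ((N - k).choose j) * (c k * y ^ j * z ^ (N - j - k)) := by ring
      _ = _ := by rw [hchoose]; ring
  · intro k j
    simp only [mem_range]
    omega

theorem sum_choose_mul_neg_one_pow_centralBinom_mul_pow_eq (N : ℕ) (x : ℤ) :
    ∑ k ∈ range (N + 1), (N.choose k : ℤ) * ((-1) ^ k * k.centralBinom) * x ^ (N - k) =
      ∑ j ∈ range (N + 1), (N.choose j : ℤ) * (N - j).centralBinom * (x - 4) ^ j := by
  rw [show x = (x - 4) + 4 by ring, sum_choose_mul_add_pow, add_sub_cancel_right]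
  simp_rw [sum_choose_mul_neg_one_pow_centralBinom_mul_four_pow]
  exact sum_congr rfl fun j _ => by ring

theorem pow_dvd_centralBinom_sub_one_sub {p n a j : ℕ} (hp : p.Prime) (hp5 : 5 ≤ p)
    (hn : n ≠ 0) (ha : p ^ a ∣ n) (hj : 1 ≤ j) :
    p ^ (a + 1 - j) ∣ (n - 1 - j).centralBinom := by
  have := Fact.mk hp
  rcases lt_or_ge a j with haj | hja
  · simp [Nat.sub_eq_zero_of_le (by omega : a + 1 ≤ j)]
  have hlarge : ∀ i, j ≤ i → 2 * j + 2 ≤ p ^ i := fun i hi =>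
    calc 2 * j + 2 ≤ 5 * i := by omega
      _ ≤ p * i := Nat.mul_le_mul_right i hp5
      _ ≤ p ^ i := Nat.mul_le_pow hp.ne_one i
  set M := n - 1 - j with hM
  have hnM : n ≤ 2 * M := by
    have := (hlarge a hja).trans (Nat.le_of_dvd (Nat.pos_of_ne_zero hn) ha)
    omega
  have hcarry : ∀ i ∈ Ico j (a + 1), p ^ i ≤ 2 * M ∧ p ^ i ≤ M % p ^ i + M % p ^ i := by
    intro i hi
    rw [mem_Ico] at hi
    have hdvd := (pow_dvd_pow p (Nat.lt_succ_iff.mp hi.2)).trans ha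
    refine ⟨(Nat.le_of_dvd (Nat.pos_of_ne_zero hn) hdvd).trans hnM, ?_⟩
    have hP := hlarge i hi.1
    obtain ⟨q, hq⟩ := hdvd
    rcases q with _ | q
    · omega
    have hmod : M % p ^ i = p ^ i - (j + 1) := by
      rw [show M = p ^ i - (j + 1) + q * p ^ i by rw [hM, hq]; ring_nf; omega,
        Nat.add_mul_mod_self_right, Nat.mod_eq_of_lt (by omega)]
    omega
  rw [Nat.centralBinom_eq_two_mul_choose]
  refine (pow_dvd_pow p ?_).trans pow_padicValNat_dvd
  rw [padicValNat_choose (b := Nat.log p (2 * M) + 1) (by omega) (Nat.lt_succ_self _),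
    show 2 * M - M = M by omega]
  calc a + 1 - j = #(Ico j (a + 1)) := by simp
    _ ≤ _ := card_le_card fun i hi => by
      obtain ⟨hle, hcar⟩ := hcarry i hi
      rw [mem_filter, mem_Ico]
      exact ⟨⟨hj.trans (mem_Ico.mp hi).1,
        Nat.lt_succ_of_le (Nat.le_log_of_pow_le hp.one_lt hle)⟩, hcar⟩

theorem pow_dvd_centralBinom_mul_pow {p n j : ℕ} (hp : p.Prime) (hp5 : 5 ≤ p) (hn : n ≠ 0)
    (hj : 1 ≤ j) {x : ℤ} (hx : (p : ℤ) ∣ x) :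
    (p : ℤ) ^ (padicValInt p x + padicValNat p n) ∣ (n - 1 - j).centralBinom * x ^ j := by
  have := Fact.mk hp
  rcases eq_or_ne x 0 with rfl | hx0
  · simp [zero_pow (by omega : j ≠ 0)]
  set e := padicValInt p x
  set a := padicValNat p n
  have he : 1 ≤ e := by
    rcases (padicValInt_dvd_iff 1 x).mp (by simpa using hx) with h | h
    exacts [absurd h hx0, h]
  have hcb : (p : ℤ) ^ (a + 1 - j) ∣ (n - 1 - j).centralBinom := by
    exact_mod_cast pow_dvd_centralBinom_sub_one_sub hp hp5 hn pow_padicValNat_dvd hj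
  have hxj : (p : ℤ) ^ (e * j) ∣ x ^ j := by
    rw [pow_mul]
    exact pow_dvd_pow_of_dvd (padicValInt_dvd x) j
  refine (pow_dvd_pow (p : ℤ) ?_).trans (pow_add (p : ℤ) _ _ ▸ mul_dvd_mul hcb hxj)
  have : e + j ≤ e * j + 1 := by nlinarith
  omega

theorem pow_dvd_four_pow_mul_sum_sub {p : ℕ} (hp : p.Prime) (hp5 : 5 ≤ p) (N : ℕ) {x : ℤ}
    (hx : (p : ℤ) ∣ x - 4) :
    (p : ℤ) ^ (padicValInt p (x - 4) + padicValNat p (N + 1)) ∣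
      4 ^ N * ∑ k ∈ range (N + 1),
          (N.choose k : ℤ) * ((-1) ^ k * k.centralBinom) * x ^ (N - k) -
        N.centralBinom * x ^ N := by
  rw [sum_choose_mul_neg_one_pow_centralBinom_mul_pow_eq, sum_range_succ']
  simp only [Nat.choose_zero_right, Nat.sub_zero, pow_zero, Nat.cast_one, one_mul, mul_one]
  rw [show ∀ s c : ℤ, 4 ^ N * (s + c) - c * x ^ N = 4 ^ N * s + c * (4 ^ N - x ^ N) by
    intros; ring]
  refine dvd_add (dvd_mul_of_dvd_right (dvd_sum fun j _ => ?_) _) ?_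
  · rw [mul_assoc]
    refine dvd_mul_of_dvd_right ?_ _
    simpa using pow_dvd_centralBinom_mul_pow hp hp5 N.succ_ne_zero (Nat.le_add_left 1 j) hx
  · rw [← succ_mul_catalan_eq_centralBinom, pow_add, mul_comm ((p : ℤ) ^ _), Nat.cast_mul]
    refine mul_dvd_mul (dvd_mul_of_dvd_left ?_ _) ?_
    · exact_mod_cast pow_padicValNat_dvd
    · exact ((padicValInt_dvd (x - 4)).trans (dvd_sub_comm.mp dvd_rfl)).trans
        (sub_dvd_pow_sub_pow 4 x N)

theorem one_div_mul_sum_sub_catalan_div_eq (N : ℕ) {m : ℤ} (hm : m ≠ 0) :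
    (1 / ((N + 1 : ℕ) : ℚ)) * ∑ k ∈ range (N + 1),
        (N.choose k : ℚ) * (-1) ^ k * (Nat.choose (2 * k) k : ℚ) / (m : ℚ) ^ k
      - (catalan N : ℚ) / 4 ^ N =
    ((4 ^ N * ∑ k ∈ range (N + 1),
          (N.choose k : ℤ) * ((-1) ^ k * k.centralBinom) * m ^ (N - k) - N.centralBinom * m ^ N
        : ℤ) : ℚ) / ((N + 1) * (4 * m) ^ N : ℤ) := by
  have hmQ : (m : ℚ) ≠ 0 := by exact_mod_cast hm
  have hsum : ∑ k ∈ range (N + 1),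
      (N.choose k : ℚ) * (-1) ^ k * (Nat.choose (2 * k) k : ℚ) / (m : ℚ) ^ k =
      (∑ k ∈ range (N + 1), (N.choose k : ℚ) * ((-1) ^ k * k.centralBinom) * m ^ (N - k)) /
        m ^ N := by
    rw [sum_div]
    refine sum_congr rfl fun k hk => ?_
    rw [pow_sub₀ _ hmQ (Nat.lt_succ_iff.mp (mem_range.mp hk)), Nat.centralBinom_eq_two_mul_choose]
    field_simp
  have hcat : (N.centralBinom : ℚ) = (N + 1) * catalan N := by
    exact_mod_cast (succ_mul_catalan_eq_centralBinom N).symm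
  rw [hsum]
  push_cast
  rw [hcat]
  field_simp
  ring

theorem le_padicValRat_intCast_div {p : ℕ} [Fact p.Prime] {z d : ℤ} {e : ℕ} (hz : z ≠ 0)
    (hd : d ≠ 0) (h : (p : ℤ) ^ (e + padicValInt p d) ∣ z) :
    (e : ℤ) ≤ padicValRat p (z / d) := by
  rw [padicValRat.div (Int.cast_ne_zero.mpr hz) (Int.cast_ne_zero.mpr hd), padicValRat.of_int,
    padicValRat.of_int]
  have := ((padicValInt_dvd_iff _ z).mp h).resolve_left hz
  omega

theorem padicValInt_mul_eq_left {p : ℕ} [Fact p.Prime] {a b : ℤ} (ha : a ≠ 0)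
    (hb : ¬ (p : ℤ) ∣ b) : padicValInt p (a * b) = padicValInt p a := by
  rw [padicValInt.mul ha (by rintro rfl; exact hb (dvd_zero _)),
    padicValInt.eq_zero_of_not_dvd hb, add_zero]

theorem not_dvd_four_mul_of_dvd_sub_four {p : ℕ} (hp : p.Prime) (hp5 : 5 ≤ p) {m : ℤ}
    (hdvd : (p : ℤ) ∣ m - 4) : ¬ (p : ℤ) ∣ 4 * m := by
  have hp4 : ¬ (p : ℤ) ∣ 4 := fun h => by
    have := Nat.le_of_dvd (by norm_num) (by exact_mod_cast h : p ∣ 4)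
    omega
  exact fun h => ((Nat.prime_iff_prime_int.mp hp).dvd_or_dvd h).elim hp4
    fun hm => hp4 (by simpa using dvd_sub hm hdvd)

theorem stmt_3 (m : ℤ) (n : ℕ) (hn : 0 < n) (p : ℕ) (hp : p.Prime) (h3 : 3 < p)
    (hdvd : (p : ℤ) ∣ m - 4) :
    (1 / (n : ℚ)) * ∑ k ∈ Finset.range n,
        ((n - 1).choose k : ℚ) * (-1) ^ k * (Nat.choose (2 * k) k : ℚ) / (m : ℚ) ^ k
        = (catalan (n - 1) : ℚ) / 4 ^ (n - 1) ∨
      (padicValInt p (m - 4) : ℤ) ≤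
        padicValRat p
          ((1 / (n : ℚ)) * ∑ k ∈ Finset.range n,
              ((n - 1).choose k : ℚ) * (-1) ^ k * (Nat.choose (2 * k) k : ℚ) / (m : ℚ) ^ k
            - (catalan (n - 1) : ℚ) / 4 ^ (n - 1)) := by
  have := Fact.mk hp
  obtain ⟨N, rfl⟩ : ∃ N, n = N + 1 := ⟨n - 1, by omega⟩
  have hp5 : 5 ≤ p := by
    have : p ≠ 4 := by rintro rfl; norm_num at hp
    omega
  have hp4m := not_dvd_four_mul_of_dvd_sub_four hp hp5 hdvd
  have hm : m ≠ 0 := by rintro rfl; simp at hp4m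
  have hd : ((N + 1) * (4 * m) ^ N : ℤ) ≠ 0 :=
    mul_ne_zero (by omega) (pow_ne_zero _ (by simpa using hm))
  rw [Nat.add_sub_cancel, ← sub_eq_zero, one_div_mul_sum_sub_catalan_div_eq N hm]
  by_cases hz : 4 ^ N * ∑ k ∈ range (N + 1),
      (N.choose k : ℤ) * ((-1) ^ k * k.centralBinom) * m ^ (N - k) - N.centralBinom * m ^ N = 0
  · simp [hz]
  refine Or.inr (le_padicValRat_intCast_div hz hd ?_)
  rw [padicValInt_mul_eq_left (by omega)
    fun h => hp4m ((Nat.prime_iff_prime_int.mp hp).dvd_of_dvd_pow h)]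
  exact_mod_cast pow_dvd_four_pow_mul_sum_sub hp hp5 N hdvd
end

section
/- Let m be an integer with 4m-1 ≠ 0 and set n = |4m-1|. Then n divides Σ_{k=0}^{n-1} C(2k,k)·m^k. -/
/-!
Over a commutative ring in which `4 * x = 1`, multiplying `∑_{k ≤ n} C(2k, k) x^k` by the unit
`4^n` gives `∑_{k ≤ n} C(2k, k) 4^(n-k) = (2n + 1) C(2n, n) = (2n + 1)(n + 1) Cat(n)`,
a multiple of `n + 1`. Apply this in `ZMod |4m - 1|` with `x = m` and `n + 1 = |4m - 1|`.
-/

open Finset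

theorem Nat.sum_range_succ_centralBinom_mul_four_pow (n : ℕ) :
    ∑ k ∈ range (n + 1), k.centralBinom * 4 ^ (n - k) = (2 * n + 1) * n.centralBinom := by
  induction n with
  | zero => simp
  | succ n ih =>
    have h_shift : ∑ k ∈ range (n + 1), k.centralBinom * 4 ^ (n + 1 - k)
        = 4 * ∑ k ∈ range (n + 1), k.centralBinom * 4 ^ (n - k) := by
      rw [mul_sum]
      refine sum_congr rfl fun k hk => ?_
      rw [Nat.sub_add_comm (Nat.lt_succ_iff.mp (mem_range.mp hk)), pow_succ]
      ring
    have h_rec := Nat.succ_mul_centralBinom_succ n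
    rw [sum_range_succ, h_shift, ih, Nat.sub_self, pow_zero]
    linarith

theorem four_pow_mul_sum_range_succ_centralBinom_mul_pow {R : Type*} [CommSemiring R] {x : R}
    (hx : 4 * x = 1) (n : ℕ) :
    4 ^ n * ∑ k ∈ range (n + 1), (k.centralBinom : R) * x ^ k
      = (n + 1) * ((2 * n + 1) * catalan n) := by
  have h_term : ∀ k ∈ range (n + 1),
      4 ^ n * ((k.centralBinom : R) * x ^ k) = ((k.centralBinom * 4 ^ (n - k) : ℕ) : R) := by
    intro k hk
    rw [← Nat.sub_add_cancel (Nat.lt_succ_iff.mp (mem_range.mp hk))]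
    push_cast
    rw [Nat.add_sub_cancel, pow_add]
    have h_inv : (4 : R) ^ k * x ^ k = 1 := by rw [← mul_pow, hx, one_pow]
    calc 4 ^ (n - k) * 4 ^ k * ((k.centralBinom : R) * x ^ k)
        = k.centralBinom * 4 ^ (n - k) * (4 ^ k * x ^ k) := by ring
      _ = k.centralBinom * 4 ^ (n - k) := by rw [h_inv, mul_one]
  rw [mul_sum, sum_congr rfl h_term, ← Nat.cast_sum, Nat.sum_range_succ_centralBinom_mul_four_pow,
    ← succ_mul_catalan_eq_centralBinom]
  push_cast
  ring

theorem sum_range_centralBinom_mul_pow_eq_zero {R : Type*} [CommRing R] {x : R}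
    (hx : 4 * x = 1) {n : ℕ} (hn : (n : R) = 0) :
    ∑ k ∈ range n, (k.centralBinom : R) * x ^ k = 0 := by
  cases n with
  | zero => simp
  | succ n =>
    have h_four : IsUnit (4 : R) := IsUnit.of_mul_eq_one x hx
    refine (h_four.pow n).mul_right_eq_zero.mp ?_
    rw [four_pow_mul_sum_range_succ_centralBinom_mul_pow hx, ← Nat.cast_succ, hn, zero_mul]

theorem stmt_5_general (m : ℤ) :
    ((4 * m - 1).natAbs : ℤ) ∣
      ∑ k ∈ Finset.range (4 * m - 1).natAbs, (Nat.choose (2 * k) k : ℤ) * m ^ k := by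
  set N := (4 * m - 1).natAbs
  have hx : 4 * (m : ZMod N) = 1 := by
    have h : ((4 * m - 1 : ℤ) : ZMod N) = 0 :=
      (ZMod.intCast_zmod_eq_zero_iff_dvd _ _).mpr (Int.natAbs_dvd.mpr dvd_rfl)
    push_cast at h
    linear_combination h
  rw [← ZMod.intCast_zmod_eq_zero_iff_dvd]
  push_cast
  exact sum_range_centralBinom_mul_pow_eq_zero hx (ZMod.natCast_self N)

theorem stmt_5 (m : ℤ) (hm : 4 * m - 1 ≠ 0) :
    ((4 * m - 1).natAbs : ℤ) ∣
      ∑ k ∈ Finset.range (4 * m - 1).natAbs, (Nat.choose (2 * k) k : ℤ) * m ^ k :=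
  stmt_5_general m
end

section
/- Let p > 3 be a prime and a a positive integer. Then Σ_{k=0}^{p^a-1} C(2k,k)·((1-(-1)^{(p-1)/2}·p)/4)^k ≡ p^a (mod p^{a+1}). -/
/-!
Put `N = p ^ a = n + 1` and `4 x = 1 + t` with `t = -(-1) ^ ((p - 1) / 2) p`. Expanding
`(1 + t) ^ k` gives `4 ^ n ∑_{k ≤ n} C(2k, k) x ^ k = ∑_j t ^ j c_j` with
`c_j = ∑_{k ≤ n} C(2k, k) C(k, j) 4 ^ (n - k)`, and these coefficients satisfy
`(2j + 1) c_j = N C(2N - 1, N - 1) C(N - 1, j)`. As `2j + 1 < p ^ j`, the factor `2j + 1` absorbs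
fewer than `j` powers of `p`, so every term with `j ≥ 1` vanishes modulo `p ^ (a + 1)`. The term
`j = 0` is `N C(2N - 1, N - 1) ≡ N` by Lucas' theorem, and `4 ^ n ≡ 1 (mod p)` by Fermat.
-/

open Finset

def centralBinomSumCoeff (n j : ℕ) : ℕ :=
  ∑ k ∈ range (n + 1), (2 * k).choose k * k.choose j * 4 ^ (n - k)

theorem two_mul_add_one_mul_centralBinomSumCoeff (n j : ℕ) :
    (2 * j + 1) * centralBinomSumCoeff n j =
      (n + 1) * (2 * n + 1).choose n * n.choose j := by
  unfold centralBinomSumCoeff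
  induction n with
  | zero => rcases j with _ | j <;> simp
  | succ n ih =>
    have hsum : ∑ k ∈ range (n + 2), (2 * k).choose k * k.choose j * 4 ^ (n + 1 - k) =
        4 * ∑ k ∈ range (n + 1), (2 * k).choose k * k.choose j * 4 ^ (n - k) +
          (2 * (n + 1)).choose (n + 1) * (n + 1).choose j := by
      rw [sum_range_succ, mul_sum, Nat.sub_self, pow_zero, mul_one]
      congr 1
      refine sum_congr rfl fun k hk => ?_
      rw [Nat.sub_add_comm (mem_range_succ_iff.mp hk), pow_succ]
      ring
    have hcentral : (2 * (n + 1)).choose (n + 1) = 2 * (2 * n + 1).choose n := by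
      rw [show 2 * (n + 1) = 2 * n + 1 + 1 by ring, Nat.choose_succ_succ, Nat.choose_symm_half]
      ring
    have hnext : (n + 2) * (2 * (n + 1) + 1).choose (n + 1) =
        (2 * (n + 1) + 1) * (2 * (n + 1)).choose (n + 1) := by
      rw [← Nat.choose_symm_half, mul_comm, ← Nat.add_one_mul_choose_eq]
    have hpascal := Nat.choose_mul_succ_eq n j
    have hweight : (n + 1).choose j * (n + 1 - j) * 2 + (n + 1).choose j * (2 * j + 1) =
        (n + 1).choose j * (2 * (n + 1) + 1) := by
      rcases le_or_gt j (n + 1) with hj | hj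
      · rw [mul_assoc, ← mul_add]; congr 1; omega
      · simp [Nat.choose_eq_zero_of_lt hj]
    rw [hsum, mul_add, mul_left_comm, ih, hnext, hcentral]
    linear_combination 4 * (2 * n + 1).choose n * hpascal + 2 * (2 * n + 1).choose n * hweight

theorem one_add_pow_eq_sum_range_of_le {R : Type*} [CommSemiring R] (t : R) {k n : ℕ}
    (hk : k ≤ n) :
    (1 + t) ^ k = ∑ j ∈ range (n + 1), t ^ j * k.choose j := by
  rw [add_comm, add_pow]
  simp only [one_pow, mul_one]
  refine sum_subset (range_subset_range.mpr (by omega)) fun j _ hj => ?_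
  rw [Nat.choose_eq_zero_of_lt (by simpa using hj), Nat.cast_zero, mul_zero]

theorem four_pow_mul_sum_choose_mul_pow {R : Type*} [CommSemiring R] (n : ℕ) {x t : R}
    (h : 4 * x = 1 + t) :
    4 ^ n * ∑ k ∈ range (n + 1), ((2 * k).choose k : R) * x ^ k =
      ∑ j ∈ range (n + 1), t ^ j * (centralBinomSumCoeff n j : R) := by
  have hterm : ∀ k ≤ n, 4 ^ n * (((2 * k).choose k : R) * x ^ k) =
      ∑ j ∈ range (n + 1), t ^ j * ((2 * k).choose k * k.choose j * 4 ^ (n - k) : ℕ) := by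
    intro k hk
    calc 4 ^ n * (((2 * k).choose k : R) * x ^ k)
        = (2 * k).choose k * (1 + t) ^ k * 4 ^ (n - k) := by
          rw [← h, mul_pow, ← Nat.sub_add_cancel hk, pow_add, Nat.add_sub_cancel]; ring
      _ = _ := by
          rw [one_add_pow_eq_sum_range_of_le t hk, mul_sum, sum_mul]
          refine sum_congr rfl fun j _ => ?_
          push_cast
          ring
  rw [mul_sum, sum_congr rfl fun k hk => hterm k (mem_range_succ_iff.mp hk), sum_comm]
  simp only [centralBinomSumCoeff, Nat.cast_sum, mul_sum]

theorem Int.ModEq.cancel_left_of_isCoprime {m c a b : ℤ} (hc : IsCoprime m c)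
    (h : c * a ≡ c * b [ZMOD m]) : a ≡ b [ZMOD m] := by
  rw [Int.modEq_iff_dvd] at h ⊢
  exact hc.dvd_of_dvd_mul_left (by rwa [mul_sub])

theorem two_mul_add_one_lt_pow {p j : ℕ} (hp : 3 < p) (hj : 1 ≤ j) : 2 * j + 1 < p ^ j := by
  induction j, hj using Nat.le_induction with
  | base => simpa using hp
  | succ j _ ih => rw [pow_succ]; nlinarith

theorem pow_succ_dvd_pow_mul_of_mul_eq {p a j A c : ℕ} (hp : p.Prime) (hj : 2 * j + 1 < p ^ j)
    (h : (2 * j + 1) * A = p ^ a * c) : p ^ (a + 1) ∣ p ^ j * A := by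
  obtain ⟨i, rfl⟩ : ∃ i, j = i + 1 :=
    Nat.exists_eq_add_one.mpr (Nat.pos_of_ne_zero (by rintro rfl; simp at hj))
  by_contra hA
  refine finiteMultiplicity_mul_aux (a := 2 * (i + 1) + 1) (n := i) (m := a) hp.prime
    (fun hd => ?_) hA ⟨c, ?_⟩
  · exact absurd (Nat.le_of_dvd (by omega) hd) (by omega)
  · rw [mul_left_comm, h, ← mul_assoc, ← pow_add]; ring_nf

theorem centralBinomSumCoeff_zero (n : ℕ) :
    centralBinomSumCoeff n 0 = (n + 1) * (2 * n + 1).choose n := by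
  simpa using two_mul_add_one_mul_centralBinomSumCoeff n 0

theorem pow_succ_dvd_pow_mul_centralBinomSumCoeff {p a n j : ℕ} (hp : p.Prime) (h3 : 3 < p)
    (hn : n + 1 = p ^ a) (hj : 1 ≤ j) : p ^ (a + 1) ∣ p ^ j * centralBinomSumCoeff n j :=
  pow_succ_dvd_pow_mul_of_mul_eq hp (two_mul_add_one_lt_pow h3 hj)
    ((two_mul_add_one_mul_centralBinomSumCoeff n j).trans (by rw [← hn, mul_assoc]))

theorem four_dvd_one_sub_neg_one_pow_mul {p : ℕ} (hp : Odd p) :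
    (4 : ℤ) ∣ 1 - (-1) ^ ((p - 1) / 2) * p := by
  obtain ⟨m, rfl⟩ := hp
  rw [show (2 * m + 1 - 1) / 2 = m by omega]
  rcases Nat.even_or_odd m with hm | ⟨r, rfl⟩
  · obtain ⟨r, rfl⟩ := hm
    rw [Even.neg_one_pow ⟨r, rfl⟩]
    exact ⟨-r, by push_cast; ring⟩
  · rw [(odd_two_mul_add_one r).neg_one_pow]
    exact ⟨r + 1, by push_cast; ring⟩

theorem pow_pred_prime_pow_modEq_one {p a n : ℕ} [hp : Fact p.Prime] {b : ℤ}
    (hb : IsCoprime (p : ℤ) b) (hn : n + 1 = p ^ a) : b ^ n ≡ 1 [ZMOD p] := by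
  have hb0 : (b : ZMod p) ≠ 0 := fun h0 =>
    (Nat.prime_iff_prime_int.mp hp.out).not_isUnit
      (hb.isUnit_of_dvd' dvd_rfl ((ZMod.intCast_zmod_eq_zero_iff_dvd b p).mp h0))
  have hfermat : (b : ZMod p) ^ n * b = 1 * b := by
    rw [← pow_succ, hn, ZMod.pow_card_pow, one_mul]
  rw [← ZMod.intCast_eq_intCast_iff]
  push_cast
  exact mul_right_cancel₀ hb0 hfermat

theorem choose_two_mul_add_one_modEq_one {p a n : ℕ} [Fact p.Prime] (hp : IsCoprime (p : ℤ) 2)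
    (hn : n + 1 = p ^ a) : (2 * n + 1).choose n ≡ 1 [ZMOD p] := by
  have hlucas : ((p ^ a * 2).choose (p ^ a * 1) : ℤ) ≡ (2 : ℕ).choose 1 [ZMOD p] :=
    Choose.choose_pow_mul_pow_mul_modEq_choose
  rw [← hn, show (n + 1) * 2 = 2 * n + 1 + 1 by ring, mul_one, Nat.choose_succ_succ,
    Nat.choose_symm_half, Nat.choose_one_right] at hlucas
  refine Int.ModEq.cancel_left_of_isCoprime hp ?_
  rw [two_mul, mul_one]
  exact_mod_cast hlucas

theorem stmt_6_general (p : ℕ) (hp : p.Prime) (h3 : 3 < p) (a : ℕ) :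
    (∑ k ∈ Finset.range (p ^ a),
        (Nat.choose (2 * k) k : ℤ) * ((1 - (-1) ^ ((p - 1) / 2) * (p : ℤ)) / 4) ^ k)
      ≡ (p : ℤ) ^ a [ZMOD (p : ℤ) ^ (a + 1)] := by
  have := Fact.mk hp
  have hodd : Odd p := hp.odd_of_ne_two (by omega)
  obtain ⟨n, hn⟩ : ∃ n, n + 1 = p ^ a :=
    ⟨p ^ a - 1, Nat.sub_add_cancel (Nat.one_le_pow _ _ hp.pos)⟩
  have hp2 : IsCoprime (p : ℤ) 2 := by
    exact_mod_cast Nat.isCoprime_iff_coprime.mpr hodd.coprime_two_right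
  have hp4 : IsCoprime (p : ℤ) 4 := by simpa using hp2.pow_right (n := 2)
  set t : ℤ := -((-1) ^ ((p - 1) / 2) * p)
  have hx : 4 * ((1 - (-1) ^ ((p - 1) / 2) * (p : ℤ)) / 4) = 1 + t := by
    rw [Int.mul_ediv_cancel' (four_dvd_one_sub_neg_one_pow_mul hodd)]
    ring
  have htail : ∀ j ∈ range n,
      (p : ℤ) ^ a * p ∣ t ^ (j + 1) * centralBinomSumCoeff n (j + 1) := by
    intro j _
    have hdvd := pow_succ_dvd_pow_mul_centralBinomSumCoeff hp h3 hn (Nat.le_add_left 1 j)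
    rw [← pow_succ, show t = (-(-1) ^ ((p - 1) / 2)) * p by ring, mul_pow, mul_assoc]
    exact Dvd.dvd.mul_left (by exact_mod_cast hdvd) _
  rw [← hn]
  refine Int.ModEq.cancel_left_of_isCoprime (c := 4 ^ n) hp4.pow_left.pow_right ?_
  rw [four_pow_mul_sum_choose_mul_pow n hx, sum_range_succ', pow_zero, one_mul,
    pow_succ (p : ℤ) a]
  calc _ ≡ 0 + (centralBinomSumCoeff n 0 : ℤ) [ZMOD (p : ℤ) ^ a * p] :=
        (Int.modEq_zero_iff_dvd.mpr (dvd_sum htail)).add_right _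
    _ = (p : ℤ) ^ a * (2 * n + 1).choose n := by
        rw [zero_add, centralBinomSumCoeff_zero, hn]; push_cast; rfl
    _ ≡ (p : ℤ) ^ a * 1 [ZMOD (p : ℤ) ^ a * p] :=
        (choose_two_mul_add_one_modEq_one hp2 hn).mul_left'
    _ ≡ (p : ℤ) ^ a * 4 ^ n [ZMOD (p : ℤ) ^ a * p] :=
        (pow_pred_prime_pow_modEq_one hp4 hn).symm.mul_left'
    _ = 4 ^ n * (p : ℤ) ^ a := mul_comm _ _

theorem stmt_6 (p : ℕ) (hp : p.Prime) (h3 : 3 < p) (a : ℕ) (ha : 0 < a) :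
    (∑ k ∈ Finset.range (p ^ a),
        (Nat.choose (2 * k) k : ℤ) * ((1 - (-1) ^ ((p - 1) / 2) * (p : ℤ)) / 4) ^ k)
      ≡ (p : ℤ) ^ a [ZMOD (p : ℤ) ^ (a + 1)] :=
  stmt_6_general p hp h3 a
end

section
/- For any positive integers n and any integer d, Σ_{0≤k<n} C(2k, k+d)·x^{n-1-k} + [d>0]·x^n·u_d(x-2) = Σ_{0≤k<n+d} C(2n,k)·u_{n+d-k}(x-2), as an identity of polynomials in x, where [d>0] is 1 if d > 0 and 0 otherwise. -/
/-!
Write `v j = u_j(x - 2)` and `V(t) = ∑ v j tʲ ∈ ℤ[x]⟦t⟧`. The recurrence of `u` at `x - 2` reads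
`(1 + t)² V = x t V + t`. Hence `R n N = [t^N] (1 + t)^(2n) V`, which is the right-hand side with
`N = n + d` because `v 0 = 0`, satisfies `R (n + 1) (N + 1) = x R n N + C(2n, N)`: the Horner
recursion that the left-hand side satisfies in `n`. Both sides equal `[d > 0] v d` at `n = 0`.
-/

open Polynomial

/-- The polynomial sequence u₀ = 0, u₁ = 1, u_{k+2} = X·u_{k+1} - u_k. -/
noncomputable def lucasPoly : ℕ → Polynomial ℤ
  | 0 => 0
  | 1 => 1
  | (k + 2) => X * lucasPoly (k + 1) - lucasPoly k

theorem PowerSeries.coeff_one_add_X_pow {R : Type*} [Semiring R] (m N : ℕ) :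
    coeff N ((1 + X : PowerSeries R) ^ m) = m.choose N := by
  rw [← Polynomial.coeff_one_add_X_pow R, ← Polynomial.coeff_coe]
  simp

local notation "T" => (PowerSeries.X : PowerSeries ℤ[X])

noncomputable def shiftedLucas (j : ℕ) : ℤ[X] := (lucasPoly j).comp (X - 2)

noncomputable def shiftedLucasSeries : PowerSeries ℤ[X] := PowerSeries.mk shiftedLucas

@[simp] lemma shiftedLucas_zero : shiftedLucas 0 = 0 := by simp [shiftedLucas, lucasPoly]

@[simp] lemma shiftedLucas_one : shiftedLucas 1 = 1 := by simp [shiftedLucas, lucasPoly]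

lemma X_mul_shiftedLucas_succ (j : ℕ) :
    X * shiftedLucas (j + 1) = shiftedLucas (j + 2) + 2 * shiftedLucas (j + 1) + shiftedLucas j := by
  simp only [shiftedLucas, lucasPoly, sub_comp, mul_comp, X_comp]
  ring

lemma one_add_X_sq_mul_shiftedLucasSeries :
    (1 + T) ^ 2 * shiftedLucasSeries = PowerSeries.C X * T * shiftedLucasSeries + T := by
  rw [show (1 + T) ^ 2 * shiftedLucasSeries = shiftedLucasSeries + T * shiftedLucasSeries
      + T * shiftedLucasSeries + T ^ 2 * shiftedLucasSeries by ring]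
  refine PowerSeries.ext fun j => ?_
  rcases j with _ | _ | j <;>
    simp [PowerSeries.coeff_X_pow_mul', PowerSeries.coeff_X, shiftedLucasSeries, mul_assoc]
  rw [X_mul_shiftedLucas_succ]
  ring

lemma coeff_one_add_X_pow_mul_shiftedLucasSeries (m N : ℕ) :
    PowerSeries.coeff N ((1 + T) ^ m * shiftedLucasSeries)
      = ∑ k ∈ Finset.range N, C (m.choose k : ℤ) * shiftedLucas (N - k) := by
  rw [PowerSeries.coeff_mul, Finset.Nat.sum_antidiagonal_eq_sum_range_succ_mk,
    Finset.sum_range_succ]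
  simp only [shiftedLucasSeries, PowerSeries.coeff_one_add_X_pow, PowerSeries.coeff_mk,
    Nat.sub_self, shiftedLucas_zero, mul_zero, add_zero, map_natCast]

lemma coeff_succ_one_add_X_pow_add_two_mul_shiftedLucasSeries (m N : ℕ) :
    PowerSeries.coeff (N + 1) ((1 + T) ^ (m + 2) * shiftedLucasSeries)
      = X * PowerSeries.coeff N ((1 + T) ^ m * shiftedLucasSeries) + (m.choose N : ℤ[X]) := by
  rw [pow_add, mul_assoc, one_add_X_sq_mul_shiftedLucasSeries,
    show (1 + T) ^ m * (PowerSeries.C X * T * shiftedLucasSeries + T)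
      = T * (PowerSeries.C X * ((1 + T) ^ m * shiftedLucasSeries) + (1 + T) ^ m) by ring,
    PowerSeries.coeff_succ_X_mul, map_add, PowerSeries.coeff_C_mul,
    PowerSeries.coeff_one_add_X_pow]

lemma sum_range_succ_mul_pow_sub {R : Type*} [CommSemiring R] (a : ℕ → R) (x : R) (n : ℕ) :
    ∑ k ∈ Finset.range (n + 1), a k * x ^ (n - k)
      = x * ∑ k ∈ Finset.range n, a k * x ^ (n - 1 - k) + a n := by
  rw [Finset.sum_range_succ, Nat.sub_self, pow_zero, mul_one, Finset.mul_sum]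
  congr 1
  refine Finset.sum_congr rfl fun k hk => ?_
  rw [show n - k = n - 1 - k + 1 by have := Finset.mem_range.mp hk; omega, pow_succ]
  ring

lemma sum_choose_mul_X_pow_add_eq_coeff (d : ℤ) (n : ℕ) :
    (∑ k ∈ Finset.range n,
        C (if 0 ≤ (k : ℤ) + d then ((2 * k).choose ((k : ℤ) + d).toNat : ℤ) else 0)
          * X ^ (n - 1 - k))
      + (if 0 < d then X ^ n * shiftedLucas d.toNat else 0)
    = PowerSeries.coeff ((n : ℤ) + d).toNat ((1 + T) ^ (2 * n) * shiftedLucasSeries) := by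
  induction n with
  | zero =>
    split_ifs with hd
    · simp [shiftedLucasSeries]
    · simp [Int.toNat_eq_zero.mpr (not_lt.mp hd), shiftedLucasSeries]
  | succ n ih =>
    rw [Nat.add_sub_cancel, sum_range_succ_mul_pow_sub, pow_succ', mul_assoc, ← mul_ite_zero,
      add_right_comm, ← mul_add, ih]
    rcases le_or_gt 0 ((n : ℤ) + d) with h | h
    · rw [if_pos h, show ((n + 1 : ℕ) + d : ℤ).toNat = ((n : ℤ) + d).toNat + 1 by omega,
        mul_add_one, coeff_succ_one_add_X_pow_add_two_mul_shiftedLucasSeries, map_natCast]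
    · rw [if_neg h.not_ge, show ((n + 1 : ℕ) + d : ℤ).toNat = 0 by omega,
        show ((n : ℤ) + d).toNat = 0 by omega, coeff_one_add_X_pow_mul_shiftedLucasSeries,
        coeff_one_add_X_pow_mul_shiftedLucasSeries]
      simp

theorem stmt_10_general (n : ℕ) (d : ℤ) :
    (∑ k ∈ Finset.range n,
        Polynomial.C (if 0 ≤ (k : ℤ) + d then ((2 * k).choose ((k : ℤ) + d).toNat : ℤ) else 0)
          * X ^ (n - 1 - k))
      + (if 0 < d then X ^ n * (lucasPoly d.toNat).comp (X - 2) else 0)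
    = ∑ k ∈ Finset.range ((n : ℤ) + d).toNat,
        Polynomial.C ((2 * n).choose k : ℤ) * (lucasPoly ((n : ℤ) + d - k).toNat).comp (X - 2) := by
  rw [← shiftedLucas, sum_choose_mul_X_pow_add_eq_coeff, coeff_one_add_X_pow_mul_shiftedLucasSeries]
  refine Finset.sum_congr rfl fun k hk => ?_
  rw [shiftedLucas, show ((n : ℤ) + d - k).toNat = ((n : ℤ) + d).toNat - k by
    have := Finset.mem_range.mp hk; omega]

theorem stmt_10 (n : ℕ) (hn : 0 < n) (d : ℤ) :
    (∑ k ∈ Finset.range n,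
        Polynomial.C (if 0 ≤ (k : ℤ) + d then ((2 * k).choose ((k : ℤ) + d).toNat : ℤ) else 0)
          * X ^ (n - 1 - k))
      + (if 0 < d then X ^ n * (lucasPoly d.toNat).comp (X - 2) else 0)
    = ∑ k ∈ Finset.range ((n : ℤ) + d).toNat,
        Polynomial.C ((2 * n).choose k : ℤ) * (lucasPoly ((n : ℤ) + d - k).toNat).comp (X - 2) :=
  stmt_10_general n d
end

section
/- Let p be a prime. Then Σ_{k=0}^{p-1} (((p-1)k)!/(k!)^{p-1}) ≡ p·B_{p-1} + (-1)^{p-1} - 2p (mod p²), where B_n is the n-th Bernoulli number. -/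
/-!
Modulo `p²` the multinomial coefficients `M_k = ((p-1)k)! / (k!)^(p-1)` vanish for `3 ≤ k < p`,
while `M_0 = 1`, `M_1 = (p-1)!` and `M_2 = (2p-2)! / 2^(p-1) ≡ -p`, so the sum is
`≡ 1 + (p-1)! - p`. On the other side, Faulhaber's formula gives `p B_{p-1} ≡ ∑_{k<p} k^(p-1)`
because the lower Bernoulli numbers are `p`-integral, and Lerch's congruence
`∑_{k<p} k^(p-1) ≡ (p-1)! + p` comes from multiplying the Fermat quotients:
in `ℤ/p²`, where `p · p = 0`, `∏ (1 + p q_k) = 1 + p ∑ q_k` equals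
`((p-1)!)^(p-1) = (-1 + p w)^(p-1) = 1 + p w`.
-/

open Finset Nat

theorem Nat.Prime.three_le_of_odd {p : ℕ} (hp : p.Prime) (hodd : Odd p) : 3 ≤ p := by
  have := hp.two_le
  rcases hodd with ⟨r, rfl⟩
  omega

section Nilpotent

variable {R ι : Type*} [CommRing R] {u : R}

theorem prod_one_add_mul_of_mul_self_eq_zero (hu : u * u = 0) (s : Finset ι) (f : ι → R) :
    ∏ i ∈ s, (1 + u * f i) = 1 + u * ∑ i ∈ s, f i := by
  classical
  induction s using Finset.induction with
  | empty => simp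
  | insert a s ha ih =>
    rw [prod_insert ha, sum_insert ha, ih]
    linear_combination (f a * ∑ i ∈ s, f i) * hu

theorem one_add_mul_pow_of_mul_self_eq_zero (hu : u * u = 0) (a : R) (n : ℕ) :
    (1 + u * a) ^ n = 1 + u * (n * a) := by
  simpa using prod_one_add_mul_of_mul_self_eq_zero hu (range n) fun _ => a

end Nilpotent

theorem ZMod.natCast_mul_self_eq_zero (n : ℕ) : (n : ZMod (n ^ 2)) * n = 0 := by
  rw [← Nat.cast_mul, ← sq, ZMod.natCast_self]

theorem ZMod.exists_intCast_eq_add_mul_of_modEq {n : ℕ} {a b : ℤ} (h : a ≡ b [ZMOD n]) :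
    ∃ q : ZMod (n ^ 2), (a : ZMod (n ^ 2)) = (b : ZMod (n ^ 2)) + (n : ZMod (n ^ 2)) * q := by
  obtain ⟨c, hc⟩ := Int.modEq_iff_dvd.mp h
  obtain rfl : a = b - n * c := by linarith
  exact ⟨-c, by push_cast; ring⟩

theorem Int.mul_modEq_self_of_modEq_one {n a m : ℤ} (ha : a ≡ 1 [ZMOD n]) (hm : n ∣ m) :
    a * m ≡ m [ZMOD n ^ 2] := by
  rw [Int.modEq_iff_dvd, show m - a * m = (1 - a) * m by ring, sq]
  exact mul_dvd_mul (Int.modEq_iff_dvd.mp ha) hm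

theorem ZMod.natCast_add_self_ascFactorial (p n k : ℕ) :
    ((p + n).ascFactorial k : ZMod p) = n.ascFactorial k := by
  simp [ascFactorial_eq_prod_range]

theorem factorial_pow_mul_multinomial_range_const (m k : ℕ) :
    k ! ^ m * Nat.multinomial (range m) (fun _ => k) = (m * k)! := by
  simpa [mul_comm] using Nat.multinomial_spec (range m) fun _ => k

theorem multinomial_range_const_zero (m : ℕ) : Nat.multinomial (range m) (fun _ => 0) = 1 := by
  simpa using factorial_pow_mul_multinomial_range_const m 0

theorem multinomial_range_const_one (m : ℕ) : Nat.multinomial (range m) (fun _ => 1) = m ! := by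
  simpa using factorial_pow_mul_multinomial_range_const m 1

section Lerch

variable {p : ℕ} [hp : Fact p.Prime]

theorem Int.factorial_sub_one_modEq_neg_one : ((p - 1)! : ℤ) ≡ -1 [ZMOD p] := by
  rw [← ZMod.intCast_eq_intCast_iff]
  push_cast
  exact ZMod.wilsons_lemma p

theorem sum_range_pow_sub_one_modEq (hodd : Odd p) :
    ∑ k ∈ range p, (k : ℤ) ^ (p - 1) ≡ (p - 1)! + p [ZMOD p ^ 2] := by
  have hu := ZMod.natCast_mul_self_eq_zero p
  have fermat : ∀ k ∈ Ico 1 p, ∃ q : ZMod (p ^ 2),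
      (k : ZMod (p ^ 2)) ^ (p - 1) = 1 + (p : ZMod (p ^ 2)) * q := by
    intro k hk
    have hcop : IsCoprime (k : ℤ) p := by
      rw [Int.isCoprime_iff_gcd_eq_one, Int.gcd_natCast_natCast]
      refine Nat.coprime_comm.mp (hp.out.coprime_iff_not_dvd.mpr ?_)
      exact Nat.not_dvd_of_pos_of_lt (mem_Ico.mp hk).1 (mem_Ico.mp hk).2
    simpa using
      ZMod.exists_intCast_eq_add_mul_of_modEq (Int.ModEq.pow_card_sub_one_eq_one hp.out hcop)
  choose! q hq using fermat
  obtain ⟨w, hw⟩ :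
      ∃ w : ZMod (p ^ 2), ((p - 1)! : ZMod (p ^ 2)) = -1 + (p : ZMod (p ^ 2)) * w := by
    simpa using
      ZMod.exists_intCast_eq_add_mul_of_modEq (Int.factorial_sub_one_modEq_neg_one (p := p))
  have key : (p : ZMod (p ^ 2)) * ∑ k ∈ Ico 1 p, q k = p * w := by
    have h := calc
      1 + p * ∑ k ∈ Ico 1 p, q k = ∏ k ∈ Ico 1 p, (1 + p * q k) :=
        (prod_one_add_mul_of_mul_self_eq_zero hu _ _).symm
      _ = ∏ k ∈ Ico 1 p, (k : ZMod (p ^ 2)) ^ (p - 1) :=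
        prod_congr rfl fun k hk => (hq k hk).symm
      _ = ((p - 1)! : ZMod (p ^ 2)) ^ (p - 1) := by
        rw [prod_pow, ← Nat.cast_prod, ← prod_Ico_id_eq_factorial,
          Nat.sub_add_cancel hp.out.pos]
      _ = (1 + p * -w) ^ (p - 1) := by
        rw [hw, ← (Nat.Odd.sub_odd hodd odd_one).neg_pow (1 + _)]
        ring
      _ = 1 + p * w := by
        rw [one_add_mul_pow_of_mul_self_eq_zero hu, Nat.cast_sub hp.out.one_le]
        linear_combination (-w) * hu
    linear_combination h
  rw [← Nat.cast_pow, ← ZMod.intCast_eq_intCast_iff]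
  push_cast
  calc ∑ k ∈ range p, (k : ZMod (p ^ 2)) ^ (p - 1) = ∑ k ∈ Ico 1 p, (1 + p * q k) := by
        rw [range_eq_Ico, sum_eq_sum_Ico_succ_bot hp.out.pos, Nat.cast_zero,
          zero_pow (Nat.sub_ne_zero_of_lt hp.out.one_lt), zero_add]
        exact sum_congr rfl hq
    _ = (p - 1)! + p := by
        rw [sum_add_distrib, ← mul_sum, key, sum_const, card_Ico, nsmul_one,
          Nat.cast_sub hp.out.one_le, hw]
        ring

end Lerch

section PadicNorm

variable {p : ℕ} [hp : Fact p.Prime]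

theorem padicNorm_le_zpow_neg_iff {q : ℚ} {n : ℤ} :
    padicNorm p q ≤ (p : ℚ) ^ (-n) ↔ q = 0 ∨ n ≤ padicValRat p q := by
  rcases eq_or_ne q 0 with rfl | hq
  · simp only [padicNorm.zero, true_or, iff_true]
    positivity
  · rw [padicNorm.eq_zpow_of_nonzero hq, zpow_le_zpow_iff_right₀ (mod_cast hp.out.one_lt),
      neg_le_neg_iff]
    simp [hq]

theorem padicNorm_bernoulli_le_one {n : ℕ} (hn : n + 1 < p) :
    padicNorm p (bernoulli n) ≤ 1 := by
  induction n using Nat.strong_induction_on with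
  | _ n ih =>
  have hrec : ((n + 1 : ℕ) : ℚ) * bernoulli n =
      (if n + 1 = 1 then 1 else 0) - ∑ k ∈ range n, ((n + 1).choose k : ℚ) * bernoulli k := by
    rw [← sum_bernoulli (n + 1), sum_range_succ, Nat.choose_succ_self_right]
    ring
  have hunit : padicNorm p ((n + 1 : ℕ) : ℚ) = 1 :=
    (padicNorm.nat_eq_one_iff _).2 (Nat.not_dvd_of_pos_of_lt n.succ_pos hn)
  calc padicNorm p (bernoulli n) = padicNorm p (((n + 1 : ℕ) : ℚ) * bernoulli n) := by
        rw [padicNorm.mul, hunit, one_mul]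
    _ ≤ 1 := by
      rw [hrec]
      refine padicNorm.sub.trans
        (max_le (by split_ifs <;> simp) (padicNorm.sum_le' ?_ zero_le_one))
      intro k hk
      rw [padicNorm.mul]
      have hk := mem_range.mp hk
      exact mul_le_one₀ (padicNorm.of_nat _) (padicNorm.nonneg _) (ih k hk (by omega))

theorem sq_dvd_choose_mul_pow {i : ℕ} (h3 : 3 ≤ p) (hi : i + 1 < p) :
    p ^ 2 ∣ p.choose i * p ^ (p - 1 - i) := by
  rcases Nat.eq_zero_or_pos i with rfl | hi0
  · simpa using Nat.pow_dvd_pow p (by omega : 2 ≤ p - 1 - 0)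
  · rw [sq]
    exact mul_dvd_mul (hp.out.dvd_choose_self hi0.ne' (by omega))
      (dvd_pow_self p (by omega))

theorem padicNorm_sum_range_pow_sub_mul_bernoulli_le (h3 : 3 ≤ p) :
    padicNorm p (∑ k ∈ range p, (k : ℚ) ^ (p - 1) - p * bernoulli (p - 1)) ≤
      (p : ℚ) ^ (-2 : ℤ) := by
  obtain ⟨n, rfl⟩ : ∃ n, p = n + 1 := ⟨p - 1, by omega⟩
  rw [Nat.add_sub_cancel, sum_range_pow, sum_range_succ, Nat.choose_succ_self_right,
    Nat.add_sub_cancel_left, add_sub_assoc]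
  have hlast : bernoulli n * ((n + 1 : ℕ) : ℚ) * ((n + 1 : ℕ) : ℚ) ^ 1 / ((n : ℚ) + 1)
      - ((n + 1 : ℕ) : ℚ) * bernoulli n = 0 := by
    push_cast
    field_simp
    ring
  rw [hlast, add_zero]
  refine padicNorm.sum_le' (fun i hi => ?_) (by positivity)
  have hi := mem_range.mp hi
  have hterm :
      bernoulli i * ((n + 1).choose i : ℚ) * ((n + 1 : ℕ) : ℚ) ^ (n + 1 - i) / ((n : ℚ) + 1)
        = bernoulli i * (((n + 1).choose i * (n + 1) ^ (n + 1 - 1 - i) : ℕ) : ℤ) := by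
    rw [show n + 1 - i = n + 1 - 1 - i + 1 by omega]
    push_cast
    field_simp
    ring
  rw [hterm, padicNorm.mul]
  have hdvd := (padicNorm.dvd_iff_norm_le (p := n + 1) (n := 2)).mp
    (Int.natCast_dvd_natCast.mpr (sq_dvd_choose_mul_pow (p := n + 1) (i := i) h3 (by omega)))
  calc _ ≤ 1 * ((n + 1 : ℕ) : ℚ) ^ (-2 : ℤ) :=
        mul_le_mul (padicNorm_bernoulli_le_one (p := n + 1) (n := i) (by omega)) hdvd
          (padicNorm.nonneg _) zero_le_one
    _ = _ := one_mul _

end PadicNorm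

section Multinomial

variable {p : ℕ} [hp : Fact p.Prime]

theorem sq_dvd_multinomial_range_const {k : ℕ} (hk : 3 ≤ k) (hkp : k < p) :
    p ^ 2 ∣ Nat.multinomial (range (p - 1)) (fun _ => k) := by
  have hcop : Coprime (p ^ 2) (k ! ^ (p - 1)) :=
    Coprime.pow _ _ (hp.out.coprime_iff_not_dvd.mpr (by rw [hp.out.dvd_factorial]; omega))
  refine hcop.dvd_of_dvd_mul_left ?_
  rw [factorial_pow_mul_multinomial_range_const]
  have hpp : p ^ 2 ∣ (p + p)! := by
    rw [sq]
    exact (mul_dvd_mul (dvd_factorial hp.out.pos le_rfl) (dvd_factorial hp.out.pos le_rfl)).trans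
      (factorial_mul_factorial_dvd_factorial_add p p)
  refine hpp.trans (factorial_dvd_factorial ?_)
  calc p + p ≤ (p - 1) * 3 := by omega
    _ ≤ (p - 1) * k := Nat.mul_le_mul_left _ hk

theorem factorial_sub_one_mul_two_modEq : (((p - 1) * 2)! : ℤ) ≡ -p [ZMOD p ^ 2] := by
  have h2 := hp.out.two_le
  have hsplit : ((p - 1) * 2)! = p * ((p - 1)! * (p + 1).ascFactorial (p - 2)) := by
    rw [← mul_assoc, mul_factorial_pred hp.out.ne_zero, factorial_mul_ascFactorial]
    congr 1
    omega
  have hwilson : ((p - 1)! : ZMod p) = -1 := ZMod.wilsons_lemma p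
  have hpred : ((p - 2)! : ZMod p) = 1 := by
    have h := mul_factorial_pred (n := p - 1) (by omega)
    rw [show p - 1 - 1 = p - 2 by omega] at h
    rw [← h, Nat.cast_mul, Nat.cast_sub hp.out.one_le, Nat.cast_one,
      ZMod.natCast_self] at hwilson
    linear_combination -hwilson
  have hmod : (((p - 1)! * (p + 1).ascFactorial (p - 2) : ℕ) : ℤ) ≡ -1 [ZMOD p] := by
    rw [← ZMod.intCast_eq_intCast_iff]
    push_cast
    rw [ZMod.natCast_add_self_ascFactorial, one_ascFactorial, hwilson, hpred, mul_one]
  rw [hsplit, sq, Nat.cast_mul, ← mul_neg_one]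
  exact hmod.mul_left'

theorem multinomial_range_const_two_modEq (hodd : Odd p) :
    (Nat.multinomial (range (p - 1)) (fun _ => 2) : ℤ) ≡ -p [ZMOD p ^ 2] := by
  set M := Nat.multinomial (range (p - 1)) (fun _ => 2)
  have hspec : 2 ^ (p - 1) * M = ((p - 1) * 2)! := by
    simpa using factorial_pow_mul_multinomial_range_const (p - 1) 2
  have hpM : p ∣ M := by
    have h : p ∣ 2 ^ (p - 1) * M := by
      rw [hspec]
      exact dvd_factorial hp.out.pos (by have := hp.out.two_le; omega)
    refine (Coprime.pow_right _ (coprime_primes hp.out prime_two |>.mpr ?_)).dvd_of_dvd_mul_left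
      h
    rintro rfl
    exact absurd hodd (by decide)
  have hfermat : (2 : ℤ) ^ (p - 1) ≡ 1 [ZMOD p] :=
    Int.ModEq.pow_card_sub_one_eq_one hp.out
      (Int.isCoprime_iff_gcd_eq_one.mpr (coprime_two_left.mpr hodd))
  calc (M : ℤ) ≡ 2 ^ (p - 1) * M [ZMOD p ^ 2] :=
        (Int.mul_modEq_self_of_modEq_one hfermat (Int.natCast_dvd_natCast.mpr hpM)).symm
    _ = ((p - 1) * 2)! := mod_cast hspec
    _ ≡ -p [ZMOD p ^ 2] := factorial_sub_one_mul_two_modEq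

theorem sum_multinomial_range_const_modEq (hodd : Odd p) :
    ∑ k ∈ range p, (Nat.multinomial (range (p - 1)) (fun _ => k) : ℤ) ≡ 1 + (p - 1)! - p
      [ZMOD p ^ 2] := by
  have h3 := hp.out.three_le_of_odd hodd
  have htail :
      ∑ k ∈ Ico 3 p, (Nat.multinomial (range (p - 1)) (fun _ => k) : ℤ) ≡ 0 [ZMOD p ^ 2] :=
    Int.modEq_zero_iff_dvd.mpr <| dvd_sum fun k hk =>
      mod_cast sq_dvd_multinomial_range_const (mem_Ico.mp hk).1 (mem_Ico.mp hk).2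
  rw [← sum_range_add_sum_Ico _ h3]
  simp only [sum_range_succ, sum_range_zero, multinomial_range_const_zero,
    multinomial_range_const_one]
  convert ((Int.ModEq.refl (1 + (p - 1)! : ℤ)).add
    (multinomial_range_const_two_modEq hodd)).add htail using 1 <;> push_cast <;> ring

end Multinomial

theorem stmt_13 (p : ℕ) (hp : p.Prime) :
    (∑ k ∈ Finset.range p, (Nat.multinomial (Finset.range (p - 1)) (fun _ => k) : ℚ))
        = (p : ℚ) * bernoulli (p - 1) + (-1) ^ (p - 1) - 2 * p ∨
      (2 : ℤ) ≤
        padicValRat p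
          ((∑ k ∈ Finset.range p, (Nat.multinomial (Finset.range (p - 1)) (fun _ => k) : ℚ))
            - ((p : ℚ) * bernoulli (p - 1) + (-1) ^ (p - 1) - 2 * p)) := by
  have := Fact.mk hp
  rw [← sub_eq_zero, ← padicNorm_le_zpow_neg_iff]
  rcases hp.eq_two_or_odd' with rfl | hodd
  · have h : (∑ k ∈ range 2, (Nat.multinomial (range (2 - 1)) (fun _ => k) : ℚ))
        - ((2 : ℕ) * bernoulli (2 - 1) + (-1) ^ (2 - 1) - 2 * (2 : ℕ))
          = ((2 ^ 3 : ℤ) : ℚ) := by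
      norm_num [sum_range_succ, multinomial_range_const_zero, multinomial_range_const_one,
        bernoulli_one]
    rw [h]
    exact padicNorm.dvd_iff_norm_le.mp (by norm_num)
  · have h3 := hp.three_le_of_odd hodd
    obtain ⟨z, hz⟩ : (p : ℤ) ^ 2 ∣
        ∑ k ∈ range p, (Nat.multinomial (range (p - 1)) (fun _ => k) : ℤ)
          - ∑ k ∈ range p, (k : ℤ) ^ (p - 1) - (1 - 2 * p) := by
      refine Int.ModEq.dvd (Int.ModEq.symm ?_)
      convert (sum_multinomial_range_const_modEq hodd).sub (sum_range_pow_sub_one_modEq hodd)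
        using 1
      ring
    have hsplit : (∑ k ∈ range p, (Nat.multinomial (range (p - 1)) (fun _ => k) : ℚ))
        - (p * bernoulli (p - 1) + (-1) ^ (p - 1) - 2 * p)
        = ((p ^ 2 * z : ℤ) : ℚ)
          + (∑ k ∈ range p, (k : ℚ) ^ (p - 1) - p * bernoulli (p - 1)) := by
      rw [← hz, (Nat.Odd.sub_odd hodd odd_one).neg_one_pow]
      push_cast
      ring
    rw [hsplit]
    refine padicNorm.nonarchimedean.trans (max_le ?_
      (padicNorm_sum_range_pow_sub_mul_bernoulli_le h3))
    exact padicNorm.dvd_iff_norm_le.mp (by push_cast; exact dvd_mul_right _ _)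
end

section
/- An integer m > 1 is prime if and only if m divides Σ_{k=0}^{m-1} ((m-1)k)!/(k!)^{m-1}. -/
/-! Write `M(n, k) = (n k)! / (k!)^n`; the terms `k = 0, 1` of the sum are `1` and `(m - 1)!`.
Splitting off one block at a time gives `M(n + 1, k) = C((n + 1) k, k) M(n, k)` with
`n + 1 ∣ C((n + 1) k, k)`, so `n! ∣ M(n, k)` for `k ≥ 1`. A composite `m ≠ 4` divides `(m - 1)!`,
hence every term with `k ≥ 1`, and the sum is `≡ 1 (mod m)`. For a prime `p`, Wilson's theorem gives
`p ∣ 1 + (p - 1)!`, and for `2 ≤ k < p` the prime `p` divides `((p - 1) k)!` but not `(k!)^(p - 1)`,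
hence divides `M(p - 1, k)`. -/

open Finset

namespace Nat

lemma mul_dvd_factorial {a b : ℕ} (ha : 0 < a) (hab : a < b) : a * b ∣ b ! := by
  rw [← mul_factorial_pred (by omega : b ≠ 0), mul_comm a]
  exact Nat.mul_dvd_mul_left b (dvd_factorial ha (by omega))

lemma dvd_factorial_pred_of_not_prime {m : ℕ} (hm : 1 < m) (hp : ¬ m.Prime) (h4 : m ≠ 4) :
    m ∣ (m - 1)! := by
  obtain ⟨a, ha, b, rfl, hab⟩ : ∃ a, a.Prime ∧ ∃ b, m = a * b ∧ a ≤ b := by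
    obtain ⟨b, hb⟩ := m.minFac_dvd
    refine ⟨_, minFac_prime hm.ne', b, hb, Nat.le_of_mul_le_mul_left ?_ (minFac_pos m)⟩
    rw [← hb, ← sq]
    exact minFac_sq_le_self (by omega) hp
  have hb : b < a * b := lt_mul_left (by have := ha.two_le; omega) ha.one_lt
  rcases hab.lt_or_eq with hlt | rfl
  · exact (mul_dvd_factorial ha.pos hlt).trans (factorial_dvd_factorial (by omega))
  · have ha3 : 3 ≤ a := by
      rcases ha.two_le.lt_or_eq with h | rfl
      exacts [h, absurd rfl h4]
    have h2a : 2 * a ≤ a * a - 1 := by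
      have := Nat.mul_le_mul_right a ha3
      omega
    calc a * a ∣ a * (2 * a) := Nat.mul_dvd_mul_left a (dvd_mul_left a 2)
      _ ∣ (2 * a)! := mul_dvd_factorial ha.pos (by omega)
      _ ∣ (a * a - 1)! := factorial_dvd_factorial h2a

lemma multinomial_range_const_succ (n k : ℕ) :
    multinomial (range (n + 1)) (fun _ => k) =
      ((n + 1) * k).choose k * multinomial (range n) (fun _ => k) := by
  rw [range_add_one, multinomial_insert notMem_range_self, sum_const, card_range, smul_eq_mul]
  ring_nf

lemma factorial_dvd_multinomial_range_const (n : ℕ) {k : ℕ} (hk : 0 < k) :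
    n ! ∣ multinomial (range n) (fun _ => k) := by
  induction n with
  | zero => simp
  | succ n ih =>
    rw [multinomial_range_const_succ, factorial_succ]
    exact Nat.mul_dvd_mul (Dvd.intro _ (choose_mul_right hk.ne').symm) ih

lemma pow_factorial_mul_multinomial_range_const (n k : ℕ) :
    k ! ^ n * multinomial (range n) (fun _ => k) = (n * k)! := by
  simpa using multinomial_spec (range n) (fun _ => k)

lemma Prime.dvd_multinomial_range_const {p n k : ℕ} (hp : p.Prime) (hkp : k < p)
    (hpnk : p ≤ n * k) : p ∣ multinomial (range n) (fun _ => k) := by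
  have hdvd : p ∣ k ! ^ n * multinomial (range n) (fun _ => k) := by
    rw [pow_factorial_mul_multinomial_range_const]
    exact hp.dvd_factorial.mpr hpnk
  exact ((hp.coprime_factorial_of_lt hkp).pow_right n).dvd_of_dvd_mul_left hdvd

lemma multinomial_range_const_zero (n : ℕ) : multinomial (range n) (fun _ => 0) = 1 := by
  simp [multinomial]

lemma multinomial_range_const_one (n : ℕ) : multinomial (range n) (fun _ => 1) = n ! := by
  simp [multinomial]

lemma sum_range_multinomial_range_const_eq (n : ℕ) :
    ∑ k ∈ range (n + 2), multinomial (range (n + 1)) (fun _ => k) =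
      ∑ k ∈ range n, multinomial (range (n + 1)) (fun _ => k + 2) + ((n + 1)! + 1) := by
  rw [sum_range_succ', sum_range_succ', multinomial_range_const_zero, add_assoc]
  simp only [multinomial_range_const_one, zero_add]

end Nat

open Nat

theorem stmt_14 (m : ℕ) (hm : 1 < m) :
    m.Prime ↔ m ∣ ∑ k ∈ Finset.range m, Nat.multinomial (Finset.range (m - 1)) (fun _ => k) := by
  obtain ⟨n, rfl⟩ : ∃ n, m = n + 2 := ⟨m - 2, by omega⟩
  rw [show n + 2 - 1 = n + 1 from rfl, sum_range_multinomial_range_const_eq]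
  constructor
  · intro hp
    have hwilson : n + 2 ∣ (n + 1)! + 1 := by
      rw [← ZMod.natCast_eq_zero_iff]
      push_cast
      rw [show n + 1 = n + 2 - 1 from rfl, (prime_iff_fac_equiv_neg_one (by omega)).mp hp]
      ring
    refine dvd_add (dvd_sum fun k hk => hp.dvd_multinomial_range_const ?_ ?_) hwilson
    · have := mem_range.mp hk; omega
    · nlinarith
  · intro hdvd
    by_contra hp
    by_cases h4 : n + 2 = 4
    · obtain rfl : n = 2 := by omega
      revert hdvd; decide
    have hfact : n + 2 ∣ (n + 1)! := dvd_factorial_pred_of_not_prime hm hp h4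
    have hterms : n + 2 ∣ ∑ k ∈ range n, multinomial (range (n + 1)) (fun _ => k + 2) :=
      dvd_sum fun k _ => hfact.trans (factorial_dvd_multinomial_range_const _ (by omega))
    have hone : n + 2 ∣ 1 :=
      (Nat.dvd_add_right (hterms.add hfact)).mp (by rwa [← add_assoc] at hdvd)
    exact absurd (Nat.dvd_one.mp hone) (by omega)
end

section
/- Let p be a prime and n a positive integer. If n ≢ 1 (mod p), or some digit of n in base p is greater than 1, then Σ_{k=0}^{n-1} ((p-1)k)!/(k!)^{p-1} ≡ 0 (mod p). -/
/-!
Write `M r k = (r k)! / (k!)^r = ∏_{i < r} C((i+1)k, k)`. Applying Lucas' theorem factor by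
factor gives `M r (p j + s) ≡ M r j · M r s (mod p)` for `s < p`; when `r s ≥ p` both sides
vanish, since then `p ∣ (r s)!` while `p ∤ s!`. So `M (p-1)` is multiplicative in the base-`p`
digits, and on a single digit it takes the values `1`, `(p-1)! ≡ -1` (Wilson) and `0` (for
digits `≥ 2`). Each block of `p` consecutive terms therefore sums to `0`, and writing
`n = p q + t` the whole sum is `M (p-1) q · ∑_{s<t} M (p-1) s`, which vanishes unless `t = 1`;
if `t = 1`, the hypothesis puts a digit `≥ 2` into `q`, making `M (p-1) q ≡ 0`.
-/

open Finset Nat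

def centralMultinomial (r k : ℕ) : ℕ :=
  multinomial (range r) fun _ => k

theorem centralMultinomial_succ_left (r k : ℕ) :
    centralMultinomial (r + 1) k = ((r + 1) * k).choose k * centralMultinomial r k := by
  rw [centralMultinomial, range_add_one, multinomial_insert notMem_range_self, sum_const,
    card_range, smul_eq_mul, add_comm k, ← add_one_mul]
  rfl

theorem factorial_pow_mul_centralMultinomial (r k : ℕ) :
    k ! ^ r * centralMultinomial r k = (r * k)! := by
  simpa [centralMultinomial] using multinomial_spec (range r) fun _ => k

@[simp]
theorem centralMultinomial_zero_left (k : ℕ) : centralMultinomial 0 k = 1 := by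
  simp [centralMultinomial]

@[simp]
theorem centralMultinomial_zero_right (r : ℕ) : centralMultinomial r 0 = 1 := by
  simpa using factorial_pow_mul_centralMultinomial r 0

theorem centralMultinomial_one_right (r : ℕ) : centralMultinomial r 1 = r ! := by
  simpa using factorial_pow_mul_centralMultinomial r 1

theorem Finset.sum_range_mul_add_of_map_mul_add {R : Type*} [CommSemiring R] {p : ℕ}
    {f : ℕ → R} (hf : ∀ j s, s < p → f (p * j + s) = f j * f s) (q : ℕ) {t : ℕ}
    (ht : t ≤ p) :
    ∑ k ∈ range (p * q + t), f k =
      (∑ j ∈ range q, f j) * (∑ s ∈ range p, f s) + f q * ∑ s ∈ range t, f s := by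
  have block (j : ℕ) {t : ℕ} (ht : t ≤ p) :
      ∑ s ∈ range t, f (p * j + s) = f j * ∑ s ∈ range t, f s := by
    rw [mul_sum]
    exact sum_congr rfl fun s hs => hf j s ((mem_range.1 hs).trans_le ht)
  rw [sum_range_add, block q ht]
  congr 1
  induction q with
  | zero => simp
  | succ q ih => rw [mul_add_one, sum_range_add, ih, block q le_rfl, sum_range_succ, add_mul]

section ZModPrime

variable {p : ℕ} [hp : Fact p.Prime]

theorem cast_choose_mul_add_mul_add (a b c d : ℕ) (hb : b < p) (hd : d < p) :
    (((p * a + b).choose (p * c + d) : ℕ) : ZMod p) = a.choose c * b.choose d := by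
  have hp0 := hp.out.pos
  rw [(ZMod.natCast_eq_natCast_iff _ _ _).2 Choose.choose_modEq_choose_mod_mul_choose_div_nat,
    Nat.mul_add_mod, Nat.mul_add_mod, Nat.mul_add_div hp0, Nat.mul_add_div hp0,
    Nat.mod_eq_of_lt hb, Nat.mod_eq_of_lt hd, Nat.div_eq_of_lt hb, Nat.div_eq_of_lt hd,
    add_zero, add_zero, Nat.cast_mul, mul_comm]

theorem cast_centralMultinomial_eq_zero {r s : ℕ} (hs : s < p) (hrs : p ≤ r * s) :
    (centralMultinomial r s : ZMod p) = 0 := by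
  have hfact : ((s ! ^ r : ℕ) : ZMod p) ≠ 0 := by
    rw [Ne, ZMod.natCast_eq_zero_iff]
    exact fun h => absurd (hp.out.dvd_factorial.1 (hp.out.dvd_of_dvd_pow h)) hs.not_ge
  have hprod : ((s ! ^ r * centralMultinomial r s : ℕ) : ZMod p) = 0 := by
    rw [factorial_pow_mul_centralMultinomial, ZMod.natCast_eq_zero_iff]
    exact hp.out.dvd_factorial.2 hrs
  rw [Nat.cast_mul] at hprod
  exact (mul_eq_zero.1 hprod).resolve_left hfact

/-- If `m s ≥ p`, the last base-`p` digit of `m s` is `m s - p < s`, so both sides vanish. -/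
theorem cast_choose_mul_mul_add (m j s : ℕ) (hs : s < p) (hms : m * s < p + s) :
    (((m * (p * j + s)).choose (p * j + s) : ℕ) : ZMod p) =
      (m * j).choose j * (m * s).choose s := by
  rcases lt_or_ge (m * s) p with hlt | hge
  · rw [show m * (p * j + s) = p * (m * j) + m * s by ring,
      cast_choose_mul_add_mul_add _ _ _ _ hlt hs]
  · obtain ⟨t, ht⟩ := Nat.exists_eq_add_of_le hge
    have hts : t < s := by omega
    have hzero : (((p + t).choose s : ℕ) : ZMod p) = 0 := by
      simpa [choose_eq_zero_of_lt hts] using cast_choose_mul_add_mul_add 1 t 0 s (hts.trans hs) hs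
    rw [show m * (p * j + s) = p * (m * j + 1) + t by rw [mul_add, ht]; ring, ht, hzero,
      cast_choose_mul_add_mul_add _ _ _ _ (hts.trans hs) hs, choose_eq_zero_of_lt hts]
    simp

theorem cast_centralMultinomial_mul_add (r j : ℕ) {s : ℕ} (hs : s < p) :
    (centralMultinomial r (p * j + s) : ZMod p) =
      centralMultinomial r j * centralMultinomial r s := by
  induction r with
  | zero => simp
  | succ r ih =>
    simp only [centralMultinomial_succ_left, Nat.cast_mul]
    rcases lt_or_ge (r * s) p with hrs | hrs
    · rw [ih, cast_choose_mul_mul_add _ _ _ hs (by rw [add_one_mul]; omega)]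
      ring
    · rw [ih, cast_centralMultinomial_eq_zero hs hrs]
      simp

theorem cast_centralMultinomial_eq_prod_digits (r q : ℕ) :
    (centralMultinomial r q : ZMod p) =
      ((p.digits q).map fun d => (centralMultinomial r d : ZMod p)).prod := by
  induction q using Nat.strong_induction_on with
  | _ q ih =>
    rcases q.eq_zero_or_pos with rfl | hq
    · simp
    · rw [Nat.digits_def' hp.out.one_lt hq, List.map_cons, List.prod_cons,
        ← ih (q / p) (Nat.div_lt_self hq hp.out.one_lt), mul_comm,
        ← cast_centralMultinomial_mul_add _ _ (Nat.mod_lt _ hp.out.pos), Nat.div_add_mod]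

theorem cast_centralMultinomial_pred_one : (centralMultinomial (p - 1) 1 : ZMod p) = -1 := by
  rw [centralMultinomial_one_right, ZMod.wilsons_lemma]

theorem cast_centralMultinomial_pred_eq_zero {s : ℕ} (h2 : 2 ≤ s) (hs : s < p) :
    (centralMultinomial (p - 1) s : ZMod p) = 0 :=
  cast_centralMultinomial_eq_zero hs <|
    calc p ≤ (p - 1) * 2 := by omega
      _ ≤ (p - 1) * s := Nat.mul_le_mul_left _ h2

theorem cast_centralMultinomial_pred_eq_zero_of_mem_digits {q d : ℕ} (hd : d ∈ p.digits q)
    (hd1 : 1 < d) : (centralMultinomial (p - 1) q : ZMod p) = 0 := by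
  rw [cast_centralMultinomial_eq_prod_digits]
  exact List.prod_eq_zero (List.mem_map.2
    ⟨d, hd, cast_centralMultinomial_pred_eq_zero hd1 (Nat.digits_lt_base hp.out.one_lt hd)⟩)

theorem sum_range_cast_centralMultinomial_pred {t : ℕ} (ht : t ≤ p) (ht1 : t ≠ 1) :
    ∑ s ∈ range t, (centralMultinomial (p - 1) s : ZMod p) = 0 := by
  rcases t with _ | _ | u
  · simp
  · exact absurd rfl ht1
  · rw [sum_range_succ', sum_range_succ', sum_eq_zero fun s hs =>
      cast_centralMultinomial_pred_eq_zero (by omega) (by rw [mem_range] at hs; omega)]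
    simp [cast_centralMultinomial_pred_one]

end ZModPrime

theorem stmt_15 (p : ℕ) (hp : p.Prime) (n : ℕ) (hn : 0 < n)
    (h : ¬ n ≡ 1 [MOD p] ∨ ∃ d ∈ Nat.digits p n, 1 < d) :
    (∑ k ∈ Finset.range n, (Nat.multinomial (Finset.range (p - 1)) (fun _ => k) : ZMod p))
      = 0 := by
  have := Fact.mk hp
  have hsum := sum_range_mul_add_of_map_mul_add
    (f := fun k => (centralMultinomial (p - 1) k : ZMod p))
    (fun j _ => cast_centralMultinomial_mul_add _ j) (n / p) (Nat.mod_lt n hp.pos).le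
  rw [Nat.div_add_mod, sum_range_cast_centralMultinomial_pred le_rfl hp.one_lt.ne', mul_zero,
    zero_add] at hsum
  refine hsum.trans ?_
  by_cases h1 : n % p = 1
  · obtain ⟨d, hd, hd1⟩ := h.resolve_left fun hne =>
      hne (by rw [Nat.ModEq, h1, Nat.mod_eq_of_lt hp.one_lt])
    rw [Nat.digits_def' hp.one_lt hn, h1] at hd
    rw [cast_centralMultinomial_pred_eq_zero_of_mem_digits
      ((List.mem_cons.1 hd).resolve_left (by omega)) hd1, zero_mul]
  · rw [sum_range_cast_centralMultinomial_pred (Nat.mod_lt n hp.pos).le h1, mul_zero]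
end

section
/- Let p be a prime and n a positive integer. If all base-p digits of n lie in {0,1}, then ∏_{j=1}^{p-1} C(jn, n) ≡ (-1)^{ψ_p(n)} (mod p), where ψ_p(n) is the sum of the base-p digits of n; otherwise ∏_{j=1}^{p-1} C(jn, n) ≡ 0 (mod p). -/
/-!
By Lucas' theorem `C(jn, n) ≡ ∏ᵢ C(mᵢ, nᵢ) (mod p)`, where `mᵢ` and `nᵢ` are the base-`p` digits of
`j n` and `n`. If every `nᵢ` is `0` or `1` and `j < p`, the product `j n` has no carries, so
`mᵢ = j nᵢ`, each factor is `j ^ nᵢ` and `C(jn, n) ≡ j ^ ψ_p(n)`; Wilson's theorem then turns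
`∏ⱼ j ^ ψ_p(n)` into `(-1) ^ ψ_p(n)`. Otherwise let `d = nᵢ ≥ 2` be the lowest digit exceeding `1`
and take `j ≡ d⁻¹ (mod p)`: the lower digits still produce no carry, so `mᵢ = 1 < d` and Lucas'
theorem makes `C(jn, n)` vanish mod `p`.
-/

open Finset

namespace Nat

lemma mul_mod_eq_and_mul_div_eq {p j n : ℕ} (h : j * (n % p) < p) :
    j * n % p = j * (n % p) ∧ j * n / p = j * (n / p) := by
  have hp : 0 < p := pos_of_ne_zero (by rintro rfl; simp at h)
  have hjn : j * n = j * (n % p) + p * (j * (n / p)) := by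
    conv_lhs => rw [← mod_add_div n p]
    ring
  rw [hjn, add_mul_mod_self_left, mod_eq_of_lt h, add_mul_div_left _ _ hp, div_eq_of_lt h,
    zero_add]
  exact ⟨rfl, rfl⟩

lemma choose_mul_self_of_le_one (j : ℕ) {r : ℕ} (hr : r ≤ 1) : (j * r).choose r = j ^ r := by
  interval_cases r <;> simp

variable {p : ℕ} [Fact p.Prime]

lemma choose_cast_eq_choose_mod_mul_choose_div (m k : ℕ) :
    (m.choose k : ZMod p) = (m % p).choose (k % p) * (m / p).choose (k / p) := by
  exact_mod_cast (ZMod.natCast_eq_natCast_iff _ _ _).mpr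
    Choose.choose_modEq_choose_mod_mul_choose_div_nat

lemma choose_mul_self_cast_eq_of_mul_mod_lt {j n : ℕ} (h : j * (n % p) < p) :
    ((j * n).choose n : ZMod p) =
      (j * (n % p)).choose (n % p) * (j * (n / p)).choose (n / p) := by
  obtain ⟨hmod, hdiv⟩ := mul_mod_eq_and_mul_div_eq h
  rw [← hmod, ← hdiv, choose_cast_eq_choose_mod_mul_choose_div]

lemma choose_mul_self_cast_eq_pow_digits_sum {j : ℕ} (hj : j < p) (n : ℕ)
    (hdig : ∀ d ∈ digits p n, d ≤ 1) :
    ((j * n).choose n : ZMod p) = (j : ZMod p) ^ (digits p n).sum := by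
  have hp : 1 < p := (Fact.out : p.Prime).one_lt
  induction n using Nat.strong_induction_on with
  | _ n ih =>
    rcases eq_zero_or_pos n with rfl | hn
    · simp
    rw [digits_def' hp hn, List.forall_mem_cons] at hdig
    have hlast : j * (n % p) < p := by nlinarith [hdig.1]
    rw [choose_mul_self_cast_eq_of_mul_mod_lt hlast, choose_mul_self_of_le_one j hdig.1,
      ih (n / p) (div_lt_self hn hp) hdig.2, digits_def' hp hn, List.sum_cons, pow_add, cast_pow]

lemma exists_choose_mul_self_cast_eq_zero (n : ℕ) (hbig : ∃ d ∈ digits p n, 1 < d) :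
    ∃ j ∈ Icc 1 (p - 1), ((j * n).choose n : ZMod p) = 0 := by
  have hp : 1 < p := (Fact.out : p.Prime).one_lt
  induction n using Nat.strong_induction_on with
  | _ n ih =>
    obtain ⟨d, hd, hd1⟩ := hbig
    rcases eq_zero_or_pos n with rfl | hn
    · simp at hd
    rw [digits_def' hp hn, List.mem_cons] at hd
    by_cases hlast : n % p ≤ 1
    · obtain ⟨j, hj, hzero⟩ := ih (n / p) (div_lt_self hn hp)
        ⟨d, hd.resolve_left (by omega), hd1⟩
      have hjp : j < p := by grind
      refine ⟨j, hj, ?_⟩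
      rw [choose_mul_self_cast_eq_of_mul_mod_lt (by nlinarith), hzero, mul_zero]
    · have hr : (n : ZMod p) ≠ 0 := by
        rw [← ZMod.natCast_mod, Ne, ZMod.natCast_eq_zero_iff]
        exact fun hdvd => hlast (by simp [eq_zero_of_dvd_of_lt hdvd (mod_lt n (by omega))])
      refine ⟨(n : ZMod p)⁻¹.val, mem_Icc.mpr ⟨?_, ?_⟩, ?_⟩
      · exact one_le_iff_ne_zero.mpr ((ZMod.val_ne_zero _).mpr (inv_ne_zero hr))
      · exact le_sub_one_of_lt (ZMod.val_lt _)
      · have hcarry : (n : ZMod p)⁻¹.val * n % p = 1 := by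
          rw [← ZMod.val_natCast, cast_mul, ZMod.natCast_val, ZMod.cast_id,
            inv_mul_cancel₀ hr, ZMod.val_one]
        rw [choose_cast_eq_choose_mod_mul_choose_div, hcarry, choose_eq_zero_of_lt (by omega),
          cast_zero, zero_mul]

end Nat

theorem stmt_17_general (p : ℕ) (hp : p.Prime) (n : ℕ) :
    ((∀ d ∈ Nat.digits p n, d ≤ 1) →
        (∏ j ∈ Finset.Icc 1 (p - 1), ((j * n).choose n : ZMod p))
          = (-1) ^ (Nat.digits p n).sum)
    ∧ ((∃ d ∈ Nat.digits p n, 1 < d) →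
        (∏ j ∈ Finset.Icc 1 (p - 1), ((j * n).choose n : ZMod p)) = 0) := by
  have : Fact p.Prime := ⟨hp⟩
  refine ⟨fun hdig => ?_, fun hbig => ?_⟩
  · rw [prod_congr rfl fun j hj =>
      Nat.choose_mul_self_cast_eq_pow_digits_sum (by grind) n hdig,
      prod_pow, Icc_sub_one_right_eq_Ico_of_not_isMin (by simp [hp.ne_zero]),
      ZMod.prod_Ico_one_prime]
  · obtain ⟨j, hj, hzero⟩ := Nat.exists_choose_mul_self_cast_eq_zero n hbig
    exact prod_eq_zero hj hzero

theorem stmt_17 (p : ℕ) (hp : p.Prime) (n : ℕ) (hn : 0 < n) :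
    ((∀ d ∈ Nat.digits p n, d ≤ 1) →
        (∏ j ∈ Finset.Icc 1 (p - 1), ((j * n).choose n : ZMod p))
          = (-1) ^ (Nat.digits p n).sum)
    ∧ ((∃ d ∈ Nat.digits p n, 1 < d) →
        (∏ j ∈ Finset.Icc 1 (p - 1), ((j * n).choose n : ZMod p)) = 0) :=
  stmt_17_general p hp n
end

section
/- For every odd prime p, Σ_{k=0}^{p-1} ((p-1)k)!/(k!)^{p-1} ≡ 1 + (p-1)! - p (mod p²). -/
/-!
Write `M k` for the multinomial coefficient `((p-1)k)! / (k!)^(p-1)`. Then `M 0 = 1` and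
`M 1 = (p-1)!`. For `3 ≤ k < p` the numerator is divisible by `(2p)!`, hence by `p²`, while the
denominator is prime to `p`, so `M k ≡ 0 (mod p²)`. The only interesting term is `k = 2`: here
`(2p-2)! = p · (p-1)! · (p+1)(p+2)⋯(2p-2)`, and the cofactor of `p` is `≡ (p-1)! (p-2)! ≡ -1 (mod p)`
by Wilson's theorem, while `2^(p-1) ≡ 1 (mod p)` by Fermat; so `2^(p-1) (M 2 + p) ≡ 0 (mod p²)`.
-/

open Finset Nat

lemma factorial_pow_mul_multinomial_const {α : Type*} (s : Finset α) (k : ℕ) :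
    k ! ^ #s * multinomial s (fun _ => k) = (#s * k)! := by
  simpa only [prod_const, sum_const, smul_eq_mul] using multinomial_spec s (fun _ => k)

lemma multinomial_const_zero {α : Type*} (s : Finset α) : multinomial s (fun _ => 0) = 1 := by
  simpa using factorial_pow_mul_multinomial_const s 0

lemma multinomial_const_one {α : Type*} (s : Finset α) : multinomial s (fun _ => 1) = (#s)! := by
  simpa using factorial_pow_mul_multinomial_const s 1

lemma sq_dvd_multinomial_const {α : Type*} {p k : ℕ} (hp : p.Prime) (s : Finset α)
    (hkp : k < p) (hk : 2 * p ≤ #s * k) : p ^ 2 ∣ multinomial s (fun _ => k) := by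
  have hsq : p ^ 2 ∣ (2 * p)! := by
    rw [sq, two_mul]
    have hpp : p ∣ p ! := dvd_factorial hp.pos le_rfl
    exact (mul_dvd_mul hpp hpp).trans (factorial_mul_factorial_dvd_factorial_add p p)
  have hcop : Coprime (p ^ 2) (k ! ^ #s) :=
    Coprime.pow _ _ (hp.coprime_iff_not_dvd.mpr fun h => hkp.not_ge (hp.dvd_factorial.mp h))
  refine hcop.dvd_of_dvd_mul_left ?_
  rw [factorial_pow_mul_multinomial_const]
  exact hsq.trans (factorial_dvd_factorial hk)

lemma factorial_pred_mul_two {p : ℕ} (hp : 2 ≤ p) :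
    ((p - 1) * 2)! = p * ((p - 1)! * (p + 1).ascFactorial (p - 2)) := by
  rw [← mul_assoc, mul_factorial_pred (by omega), factorial_mul_ascFactorial]
  congr 1
  omega

lemma ZMod.natCast_self_add_one_ascFactorial (n k : ℕ) :
    ((n + 1).ascFactorial k : ZMod n) = k ! := by
  have h := Nat.cast_ascFactorial (S := ZMod n) 1 k
  rw [one_ascFactorial, Nat.cast_one] at h
  rw [Nat.cast_ascFactorial, Nat.cast_succ, ZMod.natCast_self, zero_add, h]

lemma ZMod.factorial_sub_two {p : ℕ} [Fact p.Prime] : ((p - 2)! : ZMod p) = 1 := by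
  have hp := (Fact.out : p.Prime).two_le
  have h := ZMod.wilsons_lemma (p := p)
  rw [← mul_factorial_pred (by omega : p - 1 ≠ 0), (by omega : p - 1 - 1 = p - 2), Nat.cast_mul,
    Nat.cast_sub (by omega), ZMod.natCast_self, Nat.cast_one, zero_sub] at h
  simpa using h

lemma multinomial_const_two_modEq {p : ℕ} (hp : p.Prime) (h2 : p ≠ 2) :
    (multinomial (range (p - 1)) (fun _ => 2) : ℤ) ≡ -p [ZMOD p ^ 2] := by
  have := Fact.mk hp
  set q := (p - 1)! * (p + 1).ascFactorial (p - 2)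
  have hq : (q : ZMod p) = -1 := by
    rw [cast_mul, ZMod.wilsons_lemma, ZMod.natCast_self_add_one_ascFactorial,
      ZMod.factorial_sub_two, mul_one]
  have hfermat : 2 ^ (p - 1) ≡ 1 [MOD p] :=
    ModEq.pow_card_sub_one_eq_one hp ((coprime_primes prime_two hp).mpr h2.symm)
  have hp_dvd : p ∣ q + 2 ^ (p - 1) := by
    rw [← ZMod.natCast_eq_zero_iff, cast_add, hq, (ZMod.natCast_eq_natCast_iff _ _ _).mpr hfermat,
      cast_one, neg_add_cancel]
  have hsq : p ^ 2 ∣ 2 ^ (p - 1) * (multinomial (range (p - 1)) (fun _ => 2) + p) := by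
    have h := factorial_pow_mul_multinomial_const (range (p - 1)) 2
    rw [card_range, factorial_two, factorial_pred_mul_two hp.two_le] at h
    rw [mul_add, h, mul_comm (2 ^ _) p, ← mul_add, sq]
    exact mul_dvd_mul_left p hp_dvd
  have hcop : Coprime (p ^ 2) (2 ^ (p - 1)) :=
    Coprime.pow _ _ ((coprime_primes hp prime_two).mpr h2)
  have h := Int.natCast_dvd_natCast.mpr (hcop.dvd_of_dvd_mul_left hsq)
  push_cast at h
  refine Int.modEq_iff_dvd.mpr ?_
  rw [← neg_add', add_comm]
  exact dvd_neg.mpr h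

theorem stmt_18 (p : ℕ) (hp : p.Prime) (hodd : Odd p) :
    (∑ k ∈ Finset.range p, (Nat.multinomial (Finset.range (p - 1)) (fun _ => k) : ℤ))
      ≡ 1 + ((p - 1).factorial : ℤ) - p [ZMOD (p : ℤ) ^ 2] := by
  have hp2 : p ≠ 2 := by rintro rfl; exact absurd hodd (by decide)
  have hp3 : 3 ≤ p := hp.two_le.lt_of_ne hp2.symm
  have hrest : (∑ k ∈ Ico 3 p, (multinomial (range (p - 1)) (fun _ => k) : ℤ)) ≡ 0 [ZMOD p ^ 2] := by
    refine Int.modEq_zero_iff_dvd.mpr (dvd_sum fun k hk => ?_)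
    obtain ⟨hk3, hkp⟩ := mem_Ico.mp hk
    have hle : 2 * p ≤ #(range (p - 1)) * k := by
      rw [card_range]; exact (by omega : 2 * p ≤ (p - 1) * 3).trans (Nat.mul_le_mul_left _ hk3)
    exact_mod_cast sq_dvd_multinomial_const hp _ hkp hle
  rw [← sum_range_add_sum_Ico _ hp3]
  simp only [sum_range_succ, sum_range_zero, multinomial_const_zero, multinomial_const_one,
    card_range]
  calc _ ≡ 0 + 1 + ((p - 1)! : ℤ) + -p + 0 [ZMOD p ^ 2] := by
        push_cast
        exact ((Int.ModEq.refl _).add (multinomial_const_two_modEq hp hp2)).add hrest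
    _ = 1 + ((p - 1)! : ℤ) - p := by ring
end
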